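/- arXiv:1407.0920 — 7 statements merged into one kernel-verified Lean document; each statement's English description precedes it below -/
import Mathlib

section
/- Let n ≥ 1 and let A be a real n×n matrix possessing the strong Perron–Frobenius property, and suppose A is diagonalizable over ℂ: there exist an invertible complex n×n matrix P and a function d : Fin n → ℂ such that (viewing A as a complex matrix) A = P · diag(d) · P⁻¹. Suppose further that there is a permutation σ of the index set with d(σ(i)) = conj(d(i)) for all i and conj(P(i,j)) = P(i,σ(j)) for all i,j. Let f : ℂ → ℂ satisfy: (a) conj(f(d(i))) = f(conj(d(i))) for every index i; (b) f(ρ(A)) is real and strictly positive; and (c) |f(d(i))| < f(ρ(A)) for every index i with d(i) ≠ ρ(A). Then there exists a real n×n matrix B whose entrywise coercion to ℂ equals P · diag(f ∘ d) · P⁻¹, and B possesses the strong Perron–Frobenius property. -/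
open Polynomial Matrix

/-- The spectral radius of a real matrix: the maximum of the moduli of the complex
roots of its characteristic polynomial. -/
noncomputable def specRadius {n : ℕ} (A : Matrix (Fin n) (Fin n) ℝ) : ℝ :=
  (((A.charpoly.map (algebraMap ℝ ℂ)).roots.map (fun z => ‖z‖₊)).sup : NNReal)

/-- The strong Perron–Frobenius property for a real matrix. -/
def HasStrongPF {n : ℕ} (A : Matrix (Fin n) (Fin n) ℝ) : Prop :=
  0 < specRadius A ∧
  (A.charpoly.map (algebraMap ℝ ℂ)).rootMultiplicity (specRadius A : ℂ) = 1 ∧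
  (∃ x : Fin n → ℝ, (∀ i, 0 < x i) ∧ A.mulVec x = (specRadius A) • x) ∧
  (∀ μ ∈ (A.charpoly.map (algebraMap ℝ ℂ)).roots,
      μ ≠ (specRadius A : ℂ) → ‖μ‖ < specRadius A)

/-- Eventual positivity of a real matrix. -/
def EventuallyPos {n : ℕ} (A : Matrix (Fin n) (Fin n) ℝ) : Prop :=
  ∃ p : ℕ, ∀ k ≥ p, ∀ i j, 0 < (A ^ k) i j

/-!
Write `A = P diag(d) P⁻¹` and `B = P diag(f ∘ d) P⁻¹`. The eigenvalues of `B` are the `f (d i)`.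
The symmetry `σ` of `P` and `d` under complex conjugation, together with `conj ∘ f = f ∘ conj`
on the spectrum, makes `B` fixed by entrywise conjugation, hence real. By (b) and (c), `f ρ(A)` is
the eigenvalue of largest modulus of `B`, and it is taken only at the indices where `d i = ρ(A)`,
so it is simple. Finally `B` acts on each eigenvector of `A` for the eigenvalue `λ` by `f λ`,
so the positive Perron vector of `A` is one of `B`.
-/

open Finset

theorem Multiset.count_map_univ_val_eq_one_iff {ι α : Type*} [Fintype ι] [DecidableEq α]
    (e : ι → α) (a : α) : (univ.val.map e).count a = 1 ↔ ∃! i, e i = a := by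
  rw [Multiset.count_map, ← Finset.filter_val, Finset.card_val, Finset.card_eq_one]
  simp only [Finset.eq_singleton_iff_unique_mem, Finset.mem_filter, Finset.mem_univ, true_and]
  exact ⟨fun ⟨i, hi, h⟩ => ⟨i, hi.symm, fun j hj => h j hj.symm⟩,
    fun ⟨i, hi, h⟩ => ⟨i, hi.symm, fun j hj => h j hj.symm⟩⟩

namespace Matrix

theorem exists_map_ofReal_eq_of_map_conj_eq {m n : Type*} {M : Matrix m n ℂ}
    (hM : M.map (starRingEnd ℂ) = M) : ∃ B : Matrix m n ℝ, B.map Complex.ofReal = M :=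
  ⟨M.map Complex.re, by ext i j; exact Complex.conj_eq_iff_re.mp (congrFun₂ hM i j)⟩

variable {n : Type*} [Fintype n]

theorem roots_charpoly_map_of_map_eq_mul_diagonal_mul_inv [DecidableEq n] {R K : Type*}
    [CommRing R] [CommRing K] [IsDomain K] (φ : R →+* K) {A : Matrix n n R} {P : Matrix n n K}
    (hP : IsUnit P) {d : n → K} (h : A.map φ = P * diagonal d * P⁻¹) :
    (A.charpoly.map φ).roots = univ.val.map d := by
  rw [← charpoly_map, h, ← hP.unit_spec, charpoly_units_conj, charpoly_diagonal,
    Finset.prod_eq_multiset_prod, show (fun i => X - C (d i)) = (fun a => X - C a) ∘ d from rfl,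
    ← Multiset.map_map, roots_multiset_prod_X_sub_C]

theorem map_mul_diagonal_mul_inv_eq_self [DecidableEq n] {K : Type*} [CommRing K]
    (τ : K →+* K) {P : Matrix n n K} (hP : IsUnit P) {e : n → K} (σ : Equiv.Perm n)
    (hPσ : ∀ i j, τ (P i j) = P i (σ j)) (heσ : ∀ i, τ (e i) = e (σ i)) :
    (P * diagonal e * P⁻¹).map τ = P * diagonal e * P⁻¹ := by
  have hinv : P⁻¹.map τ = (P.map τ)⁻¹ := by
    refine (inv_eq_left_inv ?_).symm
    rw [← Matrix.map_mul, nonsing_inv_mul P ((isUnit_iff_isUnit_det P).mp hP),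
      Matrix.map_one _ τ.map_zero τ.map_one]
  have hPσ' : P.map τ = P.submatrix (Equiv.refl n) σ := ext hPσ
  have he : (diagonal e).map τ = (diagonal e).submatrix σ σ := by
    rw [diagonal_map τ.map_zero, submatrix_diagonal_equiv]
    exact congrArg diagonal (funext heσ)
  rw [Matrix.map_mul, Matrix.map_mul, hinv, he, hPσ', inv_submatrix_equiv, submatrix_mul_equiv,
    submatrix_mul_equiv, Equiv.coe_refl, submatrix_id_id]

theorem mul_diagonal_comp_mul_inv_mulVec_eq_smul [DecidableEq n] {K : Type*} [CommRing K]
    [IsDomain K] {P : Matrix n n K} (hP : IsUnit P) {d : n → K} {v : n → K} {μ : K}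
    (h : (P * diagonal d * P⁻¹) *ᵥ v = μ • v) (f : K → K) :
    (P * diagonal (fun i => f (d i)) * P⁻¹) *ᵥ v = f μ • v := by
  have hPP : P * P⁻¹ = 1 := mul_nonsing_inv P ((isUnit_iff_isUnit_det P).mp hP)
  have hPP' : P⁻¹ * P = 1 := nonsing_inv_mul P ((isUnit_iff_isUnit_det P).mp hP)
  set y := P⁻¹ *ᵥ v
  have hv : v = P *ᵥ y := by rw [mulVec_mulVec, hPP, one_mulVec]
  have hdy : diagonal d *ᵥ y = μ • y :=
    calc diagonal d *ᵥ y = (P⁻¹ * (P * diagonal d * P⁻¹)) *ᵥ v := by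
          rw [← mul_assoc, ← mul_assoc, hPP', one_mul, ← mulVec_mulVec]
      _ = μ • y := by rw [← mulVec_mulVec, h, mulVec_smul]
  have hfy : diagonal (fun i => f (d i)) *ᵥ y = f μ • y := by
    funext k
    rw [mulVec_diagonal, Pi.smul_apply, smul_eq_mul]
    by_cases hk : y k = 0
    · rw [hk, mul_zero, mul_zero]
    · have hk' := congrFun hdy k
      rw [mulVec_diagonal, Pi.smul_apply, smul_eq_mul] at hk'
      rw [mul_right_cancel₀ hk hk']
  rw [hv, mulVec_mulVec, mul_assoc, mul_assoc, hPP', mul_one, ← mulVec_mulVec, hfy, mulVec_smul]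

theorem map_mulVec_map_eq_smul_iff {R S : Type*} [CommSemiring R] [CommSemiring S]
    (φ : R →+* S) (hφ : Function.Injective φ) (A : Matrix n n R) (x : n → R) (c : R) :
    A.map φ *ᵥ (φ ∘ x) = φ c • (φ ∘ x) ↔ A *ᵥ x = c • x := by
  simp only [funext_iff, ← RingHom.map_mulVec, Pi.smul_apply, Function.comp_apply, smul_eq_mul,
    ← map_mul, hφ.eq_iff]

end Matrix

theorem specRadius_eq_of_roots_eq_map {n : ℕ} {A : Matrix (Fin n) (Fin n) ℝ} {ι : Type*}
    [Fintype ι] {e : ι → ℂ} (hroots : (A.charpoly.map (algebraMap ℝ ℂ)).roots = univ.val.map e)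
    {r : ℝ} (hle : ∀ i, ‖e i‖ ≤ r) (i₀ : ι) (hi₀ : ‖e i₀‖ = r) : specRadius A = r := by
  have hr : 0 ≤ r := hi₀ ▸ norm_nonneg _
  suffices ((univ.val.map e).map (fun z => ‖z‖₊)).sup = ⟨r, hr⟩ by
    rw [specRadius, hroots, this]; rfl
  refine le_antisymm (Multiset.sup_le.mpr ?_) (Multiset.le_sup ?_)
  · simp only [Multiset.map_map, Multiset.mem_map, Finset.mem_val, Finset.mem_univ, true_and,
      Function.comp_apply, forall_exists_index, forall_apply_eq_imp_iff]
    intro i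
    exact_mod_cast hle i
  · exact Multiset.mem_map.mpr ⟨e i₀, Multiset.mem_map_of_mem e (Finset.mem_univ i₀),
      NNReal.eq hi₀⟩

theorem hasStrongPF_of_roots_eq_map {n : ℕ} {A : Matrix (Fin n) (Fin n) ℝ} {ι : Type*}
    [Fintype ι] {e : ι → ℂ} (hroots : (A.charpoly.map (algebraMap ℝ ℂ)).roots = univ.val.map e)
    {r : ℝ} (hr : 0 < r) (hunique : ∃! i, e i = r) (hlt : ∀ i, e i ≠ r → ‖e i‖ < r)
    (hvec : ∃ x : Fin n → ℝ, (∀ i, 0 < x i) ∧ A *ᵥ x = r • x) : HasStrongPF A := by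
  obtain ⟨i₀, hi₀, huniq⟩ := hunique
  have hnorm : ‖(r : ℂ)‖ = r := by rw [Complex.norm_real, Real.norm_of_nonneg hr.le]
  have hle : ∀ i, ‖e i‖ ≤ r := fun i =>
    (eq_or_ne (e i) r).elim (fun h => by rw [h, hnorm]) fun h => (hlt i h).le
  have hA : specRadius A = r := specRadius_eq_of_roots_eq_map hroots hle i₀ (by rw [hi₀, hnorm])
  refine ⟨hA ▸ hr, ?_, hA ▸ hvec, ?_⟩
  · rw [← count_roots, hroots, hA, Multiset.count_map_univ_val_eq_one_iff]
    exact ⟨i₀, hi₀, huniq⟩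
  · rw [hroots, hA]
    intro μ hμ hne
    obtain ⟨i, -, rfl⟩ := Multiset.mem_map.mp hμ
    exact hlt i hne

theorem strongPF_of_frobenius_diagonalizable_general {n : ℕ}
    (A : Matrix (Fin n) (Fin n) ℝ) (hA : HasStrongPF A)
    (P : Matrix (Fin n) (Fin n) ℂ) (hP : IsUnit P) (d : Fin n → ℂ)
    (hdiag : A.map Complex.ofReal = P * Matrix.diagonal d * P⁻¹)
    (σ : Equiv.Perm (Fin n))
    (hdσ : ∀ i, d (σ i) = starRingEnd ℂ (d i))
    (hPσ : ∀ i j, starRingEnd ℂ (P i j) = P i (σ j))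
    (f : ℂ → ℂ)
    (hconj : ∀ i, starRingEnd ℂ (f (d i)) = f (starRingEnd ℂ (d i)))
    (hreal : (f (specRadius A)).im = 0)
    (hpos : 0 < (f (specRadius A)).re)
    (hmod : ∀ i, d i ≠ (specRadius A : ℂ) →
      ‖f (d i)‖ < (f (specRadius A)).re) :
    ∃ B : Matrix (Fin n) (Fin n) ℝ,
      B.map Complex.ofReal = P * Matrix.diagonal (fun i => f (d i)) * P⁻¹ ∧
      HasStrongPF B := by
  set ρ := specRadius A
  set r := (f ρ).re
  have hfρ : f ρ = r := Complex.ext rfl (by simpa using hreal)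
  have hfd : ∀ i, f (d i) = r ↔ d i = ρ := fun i =>
    ⟨fun h => by_contra fun hne =>
      (hmod i hne).ne' (by rw [h, Complex.norm_real, Real.norm_of_nonneg hpos.le]),
     fun h => h ▸ hfρ⟩
  have hρ : ∃! i, d i = ρ := by
    rw [← Multiset.count_map_univ_val_eq_one_iff,
      ← roots_charpoly_map_of_map_eq_mul_diagonal_mul_inv (algebraMap ℝ ℂ) hP hdiag, count_roots]
    exact hA.2.1
  obtain ⟨B, hB⟩ := exists_map_ofReal_eq_of_map_conj_eq <|
    map_mul_diagonal_mul_inv_eq_self (starRingEnd ℂ) hP (e := fun i => f (d i)) σ hPσ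
      fun i => by rw [hconj, hdσ i]
  obtain ⟨x, hx, hAx⟩ := hA.2.2.1
  refine ⟨B, hB, hasStrongPF_of_roots_eq_map
    (roots_charpoly_map_of_map_eq_mul_diagonal_mul_inv (algebraMap ℝ ℂ) hP hB) hpos
    (by simpa only [hfd] using hρ) (fun i hi => hmod i (mt (hfd i).2 hi)) ⟨x, hx, ?_⟩⟩
  rw [← map_mulVec_map_eq_smul_iff Complex.ofRealHom Complex.ofReal_injective] at hAx ⊢
  have hBx := mul_diagonal_comp_mul_inv_mulVec_eq_smul hP (hdiag ▸ hAx) f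
  rw [← hB] at hBx
  exact hBx.trans (congrArg (· • _) hfρ)

/-- Frobenius functions preserve the strong Perron–Frobenius property for
diagonalizable matrices (Theorem 4.3, diagonalizable case). -/
theorem strongPF_of_frobenius_diagonalizable {n : ℕ} (hn : 1 ≤ n)
    (A : Matrix (Fin n) (Fin n) ℝ) (hA : HasStrongPF A)
    (P : Matrix (Fin n) (Fin n) ℂ) (hP : IsUnit P) (d : Fin n → ℂ)
    (hdiag : A.map Complex.ofReal = P * Matrix.diagonal d * P⁻¹)
    (σ : Equiv.Perm (Fin n))
    (hdσ : ∀ i, d (σ i) = starRingEnd ℂ (d i))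
    (hPσ : ∀ i j, starRingEnd ℂ (P i j) = P i (σ j))
    (f : ℂ → ℂ)
    (hconj : ∀ i, starRingEnd ℂ (f (d i)) = f (starRingEnd ℂ (d i)))
    (hreal : (f (specRadius A)).im = 0)
    (hpos : 0 < (f (specRadius A)).re)
    (hmod : ∀ i, d i ≠ (specRadius A : ℂ) →
      ‖f (d i)‖ < (f (specRadius A)).re) :
    ∃ B : Matrix (Fin n) (Fin n) ℝ,
      B.map Complex.ofReal = P * Matrix.diagonal (fun i => f (d i)) * P⁻¹ ∧
      HasStrongPF B :=
  strongPF_of_frobenius_diagonalizable_general A hA P hP d hdiag σ hdσ hPσ f hconj hreal hpos hmod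
end

section
/- Let n ≥ 1, let A be a real n×n matrix possessing the strong Perron–Frobenius property, and let q be a polynomial with real coefficients such that q(ρ(A)) > 0 and, for every complex root λ of the characteristic polynomial of A with λ ≠ ρ(A), one has |q(λ)| < q(ρ(A)) (where q is evaluated over ℂ). Then the matrix q(A), obtained by evaluating the polynomial q at A, possesses the strong Perron–Frobenius property. -/
open Polynomial Matrix

/-
Over ℂ the spectrum of `q(A)`, with multiplicities, is the image of the spectrum of `A` under
`q`: `det (q(B)) = ∏ q(λ)` because both sides are multiplicative in `q` and agree on constants
and on linear factors, and applying this to `t - q` gives the characteristic polynomial of `q(B)`.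
The hypothesis on `q` makes `q(ρ)` the eigenvalue of largest modulus of `q(A)`, attained only at
`λ = ρ`, so it is the spectral radius and stays simple; the positive Perron vector of `A` is an
eigenvector of `q(A)` for `q(ρ)`.
-/

namespace Matrix

variable {ι K : Type*} [Fintype ι] [DecidableEq ι] [Field K] [IsAlgClosed K]

theorem card_roots_charpoly (B : Matrix ι ι K) :
    Multiset.card B.charpoly.roots = Fintype.card ι := by
  rw [← charpoly_natDegree_eq_dim B, splits_iff_card_roots.mp (IsAlgClosed.splits B.charpoly)]

theorem det_sub_scalar (B : Matrix ι ι K) (a : K) :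
    det (B - scalar ι a) = (B.charpoly.roots.map (· - a)).prod := by
  rw [← neg_sub, det_neg, ← eval_charpoly,
    (IsAlgClosed.splits B.charpoly).eval_eq_prod_roots_of_monic B.charpoly_monic,
    ← card_roots_charpoly B, ← Multiset.card_map (a - ·), ← Multiset.prod_map_neg, Multiset.map_map]
  simp

theorem det_aeval (B : Matrix ι ι K) (f : K[X]) :
    det (aeval B f) = (B.charpoly.roots.map f.eval).prod := by
  let φ : K[X] →* K := detMonoidHom.comp (aeval B).toMonoidHom
  have hφ (g : K[X]) : φ g = det (aeval B g) := rfl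
  have h_const (c : K) : φ (C c) = c ^ Fintype.card ι := by
    simp [hφ, Algebra.algebraMap_eq_smul_one]
  have h_lin (a : K) : φ (X - C a) = (B.charpoly.roots.map (· - a)).prod := by
    rw [← det_sub_scalar, hφ, map_sub, aeval_X, aeval_C]
    rfl
  calc det (aeval B f)
      = φ (C f.leadingCoeff * (f.roots.map (X - C ·)).prod) :=
        congrArg φ (IsAlgClosed.splits f).eq_prod_roots
    _ = (B.charpoly.roots.map f.eval).prod := by
        simp only [map_mul, map_multiset_prod, Multiset.map_map, Function.comp_def, h_const, h_lin,
          (IsAlgClosed.splits f).eval_eq_prod_roots]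
        rw [Multiset.prod_map_mul, Multiset.map_const', Multiset.prod_replicate,
          card_roots_charpoly, Multiset.prod_map_prod_map]

theorem charpoly_aeval (B : Matrix ι ι K) (p : K[X]) :
    (aeval B p).charpoly = (B.charpoly.roots.map fun z => X - C (p.eval z)).prod := by
  refine Polynomial.funext fun t => ?_
  have : scalar ι t - aeval B p = aeval B (C t - p) := by simp [algebraMap_eq_diagonal]
  rw [eval_charpoly, this, det_aeval, eval_multiset_prod, Multiset.map_map]
  simp

theorem roots_charpoly_aeval (B : Matrix ι ι K) (p : K[X]) :
    (aeval B p).charpoly.roots = B.charpoly.roots.map p.eval := by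
  have := roots_multiset_prod_X_sub_C (B.charpoly.roots.map p.eval)
  rwa [Multiset.map_map, Function.comp_def, ← charpoly_aeval] at this

theorem map_aeval {R S : Type*} [CommRing R] [CommRing S] [Algebra R S] (A : Matrix ι ι R)
    (q : R[X]) :
    (aeval A q).map (algebraMap R S) = aeval (A.map (algebraMap R S)) (q.map (algebraMap R S)) := by
  rw [aeval_map_algebraMap]
  exact (aeval_algHom_apply (Algebra.ofId R S).mapMatrix A q).symm

theorem roots_charpoly_aeval_map {F : Type*} [Field F] [Algebra F K] (A : Matrix ι ι F)
    (q : F[X]) :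
    ((aeval A q).charpoly.map (algebraMap F K)).roots =
      (A.charpoly.map (algebraMap F K)).roots.map (q.map (algebraMap F K)).eval := by
  rw [← charpoly_map, map_aeval, roots_charpoly_aeval, charpoly_map]

theorem aeval_mulVec_of_mulVec_eq_smul {R : Type*} [CommRing R] {A : Matrix ι ι R} {x : ι → R}
    {r : R} (h : A *ᵥ x = r • x) (q : R[X]) : aeval A q *ᵥ x = q.eval r • x := by
  rw [← toLinAlgEquiv'_apply, ← aeval_algHom_apply]
  exact Module.End.aeval_apply_of_mem_apply_eq_smul (by simpa using h)

end Matrix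

theorem Multiset.count_map_eq_count_of_fiber {α β : Type*} [DecidableEq α] [DecidableEq β]
    {f : α → β} {s : Multiset α} {a : α} (hf : ∀ b ∈ s, f b = f a ↔ b = a) :
    (s.map f).count (f a) = s.count a := by
  rw [count_map, count_eq_card_filter_eq]
  exact congrArg card (filter_congr fun b hb => by rw [eq_comm, hf b hb, eq_comm])

section PerronFrobenius

variable {n : ℕ}

theorem specRadius_eq_norm_of_forall_norm_le (A : Matrix (Fin n) (Fin n) ℝ) {w : ℂ}
    (hw : w ∈ (A.charpoly.map (algebraMap ℝ ℂ)).roots)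
    (hle : ∀ z ∈ (A.charpoly.map (algebraMap ℝ ℂ)).roots, ‖z‖ ≤ ‖w‖) :
    specRadius A = ‖w‖ := by
  rw [specRadius, ← coe_nnnorm, NNReal.coe_inj]
  exact le_antisymm (Multiset.sup_le.mpr <| Multiset.forall_mem_map_iff.mpr hle)
    (Multiset.le_sup (Multiset.mem_map_of_mem _ hw))

theorem eval_map_ofReal (q : ℝ[X]) (r : ℝ) :
    (q.map (algebraMap ℝ ℂ)).eval (r : ℂ) = ((q.eval r : ℝ) : ℂ) := by
  rw [eval_map, ← Complex.coe_algebraMap]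
  exact eval₂_at_apply _ r

theorem specRadius_aeval_of_dominant (A : Matrix (Fin n) (Fin n) ℝ) (q : ℝ[X])
    (hρ : (specRadius A : ℂ) ∈ (A.charpoly.map (algebraMap ℝ ℂ)).roots)
    (hq : 0 < q.eval (specRadius A))
    (hmod : ∀ μ ∈ (A.charpoly.map (algebraMap ℝ ℂ)).roots, μ ≠ (specRadius A : ℂ) →
      ‖(q.map (algebraMap ℝ ℂ)).eval μ‖ < q.eval (specRadius A)) :
    specRadius (aeval A q) = q.eval (specRadius A) := by
  have hnorm : ‖((q.eval (specRadius A) : ℝ) : ℂ)‖ = q.eval (specRadius A) :=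
    Complex.norm_of_nonneg hq.le
  rw [← hnorm, ← eval_map_ofReal]
  apply specRadius_eq_norm_of_forall_norm_le <;> rw [roots_charpoly_aeval_map]
  · exact Multiset.mem_map_of_mem _ hρ
  · refine Multiset.forall_mem_map_iff.mpr fun z hz => ?_
    rcases eq_or_ne z (specRadius A) with rfl | hzρ
    · rfl
    · rw [eval_map_ofReal, hnorm]
      exact (hmod z hz hzρ).le

end PerronFrobenius

theorem strongPF_of_frobenius_polynomial_general {n : ℕ}
    (A : Matrix (Fin n) (Fin n) ℝ) (hA : HasStrongPF A)
    (q : Polynomial ℝ) (hq : 0 < q.eval (specRadius A))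
    (hmod : ∀ μ ∈ (A.charpoly.map (algebraMap ℝ ℂ)).roots, μ ≠ (specRadius A : ℂ) →
      ‖(q.map (algebraMap ℝ ℂ)).eval μ‖ < q.eval (specRadius A)) :
    HasStrongPF (Polynomial.aeval A q) := by
  obtain ⟨-, hmult, ⟨x, hx_pos, hx_eig⟩, -⟩ := hA
  have hcount : (A.charpoly.map (algebraMap ℝ ℂ)).roots.count (specRadius A : ℂ) = 1 := by
    rwa [count_roots]
  have hρ_mem := Multiset.count_pos.mp (hcount ▸ one_pos)
  have hqρ := specRadius_aeval_of_dominant A q hρ_mem hq hmod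
  have hgρ := eval_map_ofReal q (specRadius A)
  have hroots := roots_charpoly_aeval_map (K := ℂ) A q
  refine ⟨hqρ ▸ hq, ?_, ⟨x, hx_pos, hqρ ▸ aeval_mulVec_of_mulVec_eq_smul hx_eig q⟩, ?_⟩
  · rw [← count_roots, hroots, hqρ, ← hgρ, ← hcount]
    refine Multiset.count_map_eq_count_of_fiber fun z hz => ⟨fun h => ?_, fun h => h ▸ rfl⟩
    by_contra hzρ
    exact (hmod z hz hzρ).ne (by rw [h, hgρ, Complex.norm_of_nonneg hq.le])
  · rw [hroots, hqρ]
    refine Multiset.forall_mem_map_iff.mpr fun z hz hne => hmod z hz fun hzρ => hne ?_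
    rw [hzρ, hgρ]

/-- Frobenius polynomials preserve the strong Perron–Frobenius property. -/
theorem strongPF_of_frobenius_polynomial {n : ℕ} (hn : 1 ≤ n)
    (A : Matrix (Fin n) (Fin n) ℝ) (hA : HasStrongPF A)
    (q : Polynomial ℝ) (hq : 0 < q.eval (specRadius A))
    (hmod : ∀ μ ∈ (A.charpoly.map (algebraMap ℝ ℂ)).roots, μ ≠ (specRadius A : ℂ) →
      ‖(q.map (algebraMap ℝ ℂ)).eval μ‖ < q.eval (specRadius A)) :
    HasStrongPF (Polynomial.aeval A q) :=
  strongPF_of_frobenius_polynomial_general A hA q hq hmod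
end

section
/- Let n ≥ 1 and let A be a real n×n matrix. Then A is eventually positive if and only if both A and its transpose Aᵀ possess the strong Perron–Frobenius property. -/
open Polynomial Matrix

open Filter Topology

/-!
If `A ^ k` is positive for all large `k` and `A *ᵥ v = μ • v` with `‖μ‖ = ρ = specRadius A`, then
`ρ ^ k • |v| ≤ A ^ k *ᵥ |v|`. A strictly subinvariant positive vector would force growth faster than
`ρ ^ k`, which Gelfand's formula forbids, so `|v|` is a positive `ρ`-eigenvector; equality in the
triangle inequality along a row of `A ^ k` then gives `v = ζ • |v|`, hence `μ = ρ`. With positive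
right and left eigenvectors `x`, `w` normalised by `w ⬝ᵥ x = 1`, the deflated matrix
`S = A - ρ • x wᵀ` satisfies `χ_S * (X - ρ) = χ_A * X`. Every real `ρ`-eigenvector of `A` is a
multiple of `x`, so `ρ` is not an eigenvalue of `S` and is a simple root of `χ_A`.

Conversely, under the strong Perron–Frobenius property for `A` and `Aᵀ` the same identity shows that
the spectral radius of `S` is below `ρ`, so `ρ⁻ᵏ • A ^ k = ρ⁻ᵏ • S ^ k + x wᵀ` tends to the positive
matrix `x wᵀ`.
-/

lemma exists_pos_forall_mul_le {ι : Type*} [Finite ι] {f g : ι → ℝ} (hf : ∀ i, 0 < f i) :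
    ∃ ε > 0, ∀ i, ε * g i ≤ f i := by
  have h : ∀ᶠ ε in 𝓝[>] (0 : ℝ), ∀ i, ε * g i ≤ f i := by
    refine eventually_all.2 fun i => nhdsWithin_le_nhds ?_
    have : Tendsto (fun ε : ℝ => ε * g i) (𝓝 0) (𝓝 0) := by
      simpa using (continuous_mul_const (g i)).tendsto 0
    exact this.eventually (ge_mem_nhds (hf i))
  obtain ⟨ε, hε, hε0⟩ := (h.and self_mem_nhdsWithin).exists
  exact ⟨ε, hε0, hε⟩

/-- With `ζ = exp (i arg s)` for `s = ∑ j, c j * v j`, the terms `c j * (‖v j‖ - re (ζ⁻¹ * v j))`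
are nonnegative and sum to zero. -/
lemma Complex.exists_eq_mul_norm_of_norm_sum_eq {ι : Type*} [Fintype ι] {c : ι → ℝ}
    (hc : ∀ j, 0 < c j) {v : ι → ℂ} (h : ‖∑ j, (c j : ℂ) * v j‖ = ∑ j, c j * ‖v j‖) :
    ∃ ζ : ℂ, ∀ j, v j = ζ * ‖v j‖ := by
  set s := ∑ j, (c j : ℂ) * v j
  set ζ := Complex.exp (s.arg * Complex.I)
  have hζ : ‖ζ‖ = 1 := by simp [ζ, Complex.norm_exp_ofReal_mul_I]
  have hζ0 : ζ ≠ 0 := Complex.exp_ne_zero _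
  have hs : ζ⁻¹ * s = ‖s‖ := by
    rw [inv_mul_eq_iff_eq_mul₀ hζ0, mul_comm]; exact (Complex.norm_mul_exp_arg_mul_I s).symm
  have hle : ∀ j, (ζ⁻¹ * v j).re ≤ ‖v j‖ := fun j => by
    simpa [hζ] using Complex.re_le_norm (ζ⁻¹ * v j)
  have hsum : ∑ j, c j * (‖v j‖ - (ζ⁻¹ * v j).re) = 0 := by
    have hre : ∑ j, c j * (ζ⁻¹ * v j).re = ‖s‖ := by
      have := congrArg Complex.re hs
      simp only [s, Finset.mul_sum, Complex.re_sum, Complex.ofReal_re] at this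
      rw [← this]
      refine Finset.sum_congr rfl fun j _ => ?_
      rw [mul_left_comm, Complex.re_ofReal_mul]
    simp only [mul_sub, Finset.sum_sub_distrib, hre, ← h, sub_self]
  refine ⟨ζ, fun j => ?_⟩
  have hj := (Finset.sum_eq_zero_iff_of_nonneg fun j _ =>
    mul_nonneg (hc j).le (sub_nonneg.2 (hle j))).1 hsum j (Finset.mem_univ j)
  have hre : (ζ⁻¹ * v j).re = ‖ζ⁻¹ * v j‖ := by
    rw [norm_mul, norm_inv, hζ, inv_one, one_mul]
    linarith [(mul_eq_zero.1 hj).resolve_left (hc j).ne']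
  have hreal := Complex.eq_re_of_ofReal_le (Complex.re_eq_norm.1 hre)
  rw [hre, norm_mul, norm_inv, hζ, inv_one, one_mul, inv_mul_eq_iff_eq_mul₀ hζ0] at hreal
  exact hreal

theorem spectrum.spectralRadius_pow_le_pow {𝕜 A : Type*} [NormedField 𝕜] [IsAlgClosed 𝕜] [Ring A]
    [Algebra 𝕜 A] (a : A) {k : ℕ} (hk : k ≠ 0) :
    spectralRadius 𝕜 (a ^ k) ≤ spectralRadius 𝕜 a ^ k := by
  rw [spectralRadius, spectrum.map_pow_of_pos a (Nat.pos_of_ne_zero hk)]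
  refine iSup₂_le ?_
  rintro _ ⟨z, hz, rfl⟩
  rw [nnnorm_pow, ENNReal.coe_pow]
  exact pow_le_pow_left₀ zero_le (le_iSup₂ (f := fun z _ => (‖z‖₊ : ENNReal)) z hz) k

namespace Matrix

variable {ι : Type*} [Fintype ι]

lemma mulVec_mono_of_nonneg {B : Matrix ι ι ℝ} (hB : ∀ i j, 0 ≤ B i j) {u v : ι → ℝ}
    (h : u ≤ v) : B *ᵥ u ≤ B *ᵥ v :=
  fun i => dotProduct_le_dotProduct_of_nonneg_left h (hB i)

lemma mulVec_pos_of_pos {B : Matrix ι ι ℝ} (hB : ∀ i j, 0 < B i j) {u : ι → ℝ} (hu : 0 ≤ u)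
    (hu0 : u ≠ 0) (i : ι) : 0 < (B *ᵥ u) i := by
  obtain ⟨j, hj⟩ := (Pi.lt_def.1 (hu.lt_of_ne' hu0)).2
  exact Finset.sum_pos' (fun k _ => mul_nonneg (hB i k).le (hu k))
    ⟨j, Finset.mem_univ j, mul_pos (hB i j) hj⟩

lemma pos_of_mulVec_eq_smul {B : Matrix ι ι ℝ} (hB : ∀ i j, 0 < B i j) {u : ι → ℝ} (hu : 0 ≤ u)
    (hu0 : u ≠ 0) {c : ℝ} (h : B *ᵥ u = c • u) : 0 < c ∧ ∀ i, 0 < u i := by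
  have hcu : ∀ i, 0 < c * u i := fun i => by
    simpa [h] using mulVec_pos_of_pos hB hu hu0 i
  obtain ⟨i₀, -⟩ := Function.ne_iff.1 hu0
  have hc := pos_of_mul_pos_left (hcu i₀) (hu i₀)
  exact ⟨hc, fun i => pos_of_mul_pos_right (hcu i) hc.le⟩

lemma norm_map_mulVec_le {B : Matrix ι ι ℝ} (hB : ∀ i j, 0 ≤ B i j) (v : ι → ℂ) (i : ι) :
    ‖(B.map (algebraMap ℝ ℂ) *ᵥ v) i‖ ≤ (B *ᵥ fun j => ‖v j‖) i := by
  refine (norm_sum_le _ _).trans (le_of_eq (Finset.sum_congr rfl fun j _ => ?_))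
  simp [abs_of_nonneg (hB i j)]

lemma exists_vecMul_eq_smul_dotProduct_eq_one [Nonempty ι] {A : Matrix ι ι ℝ} {c : ℝ}
    {x y : ι → ℝ} (hx : ∀ i, 0 < x i) (hy : ∀ i, 0 < y i) (hyA : y ᵥ* A = c • y) :
    ∃ w : ι → ℝ, (∀ i, 0 < w i) ∧ w ᵥ* A = c • w ∧ w ⬝ᵥ x = 1 := by
  have hyx : 0 < y ⬝ᵥ x :=
    Finset.sum_pos (fun i _ => mul_pos (hy i) (hx i)) Finset.univ_nonempty
  refine ⟨(y ⬝ᵥ x)⁻¹ • y, fun i => ?_, ?_, ?_⟩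
  · simpa using mul_pos (inv_pos.2 hyx) (hy i)
  · rw [smul_vecMul, hyA, smul_comm]
  · rw [smul_dotProduct, smul_eq_mul, inv_mul_cancel₀ hyx.ne']

lemma pow_mulVec_eq_smul {R : Type*} [CommRing R] [DecidableEq ι] {M : Matrix ι ι R}
    {c : R} {v : ι → R} (h : M *ᵥ v = c • v) (k : ℕ) : M ^ k *ᵥ v = c ^ k • v := by
  induction k with
  | zero => simp
  | succ k ih => rw [pow_succ', ← mulVec_mulVec, ih, mulVec_smul, h, smul_smul, pow_succ]

lemma exists_mulVec_eq_smul_of_isRoot {K : Type*} [Field K] [DecidableEq ι] {M : Matrix ι ι K}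
    {μ : K} (h : M.charpoly.IsRoot μ) : ∃ v ≠ 0, M *ᵥ v = μ • v := by
  rw [IsRoot, eval_charpoly] at h
  obtain ⟨v, hv0, hv⟩ := exists_mulVec_eq_zero_iff.2 h
  refine ⟨v, hv0, ?_⟩
  rw [sub_mulVec, scalar_apply, sub_eq_zero] at hv
  rw [← hv]
  ext i
  simp [mulVec_diagonal]

section Deflation

variable {R : Type*} [CommRing R] {A : Matrix ι ι R} {ρ : R} {x w : ι → R}

lemma vecMul_sub_smul_vecMulVec (hwA : w ᵥ* A = ρ • w) (hwx : w ⬝ᵥ x = 1) :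
    w ᵥ* (A - ρ • vecMulVec x w) = 0 := by
  rw [vecMul_sub, vecMul_smul, vecMul_vecMulVec, hwA, hwx, one_smul, sub_self]

variable [DecidableEq ι]

/-- With `P = vecMulVec x w` mapped to `R[X]`, `charmatrix (A - ρ • P) * (1 + (X - ρ - 1) • P)` and
`charmatrix A * (1 + (X - 1) • P)` agree, and `det (1 + s • P) = 1 + s`. -/
theorem charpoly_sub_smul_vecMulVec_mul_X_sub_C (hx : A *ᵥ x = ρ • x) (hwx : w ⬝ᵥ x = 1) :
    (A - ρ • vecMulVec x w).charpoly * (X - C ρ) = A.charpoly * X := by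
  set P : Matrix ι ι R[X] := vecMulVec (C ∘ x) (C ∘ w)
  have hwx' : (C ∘ w) ⬝ᵥ (C ∘ x) = 1 := by
    simpa [hwx] using (RingHom.map_dotProduct C w x).symm
  have hdet : ∀ s : R[X], (1 + s • P).det = 1 + s := fun s => by
    rw [← smul_vecMulVec, vecMulVec_eq Unit, det_one_add_replicateCol_mul_replicateRow,
      dotProduct_smul, hwx', smul_eq_mul, mul_one]
  have hPP : P * P = P := by rw [vecMulVec_mul_vecMulVec, hwx', one_smul]
  have hAP : charmatrix A * P = (X - C ρ) • P := by
    have hAx : (C : R →+* R[X]).mapMatrix A *ᵥ (C ∘ x) = C ρ • (C ∘ x) := by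
      ext i
      rw [RingHom.mapMatrix_apply, ← RingHom.map_mulVec, hx]
      simp
    rw [charmatrix, mul_vecMulVec, sub_mulVec, hAx, scalar_apply, ← smul_vecMulVec]
    congr 1
    ext i
    simp [sub_mul]
  have hS : charmatrix (A - ρ • vecMulVec x w) = charmatrix A + C ρ • P := by
    ext i j : 1
    simp only [P, charmatrix_apply, sub_apply, add_apply, smul_apply, vecMulVec_apply,
      Function.comp_apply, smul_eq_mul, map_sub, map_mul]
    ring
  have key : charmatrix (A - ρ • vecMulVec x w) * (1 + ((X : R[X]) - C ρ - 1) • P)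
      = charmatrix A * (1 + ((X : R[X]) - 1) • P) := by
    simp only [hS, add_mul, mul_add, Matrix.mul_smul, Matrix.smul_mul, hAP, hPP, mul_one]
    module
  have := congrArg det key
  rw [det_mul, det_mul, hdet, hdet] at this
  rw [charpoly, charpoly]
  linear_combination this

theorem pow_succ_eq_sub_smul_vecMulVec_pow_add (hx : A *ᵥ x = ρ • x) (hwA : w ᵥ* A = ρ • w)
    (hwx : w ⬝ᵥ x = 1) (k : ℕ) :
    A ^ (k + 1) = (A - ρ • vecMulVec x w) ^ (k + 1) + ρ ^ (k + 1) • vecMulVec x w := by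
  have hSP : (A - ρ • vecMulVec x w) * vecMulVec x w = 0 := by
    rw [sub_mul, mul_vecMulVec, hx, smul_mul, vecMulVec_mul_vecMulVec, hwx, one_smul,
      smul_vecMulVec, sub_self]
  have hPA : vecMulVec x w * A = ρ • vecMulVec x w := by
    rw [vecMulVec_mul, hwA, vecMulVec_smul]
  induction k with
  | zero => simp
  | succ k ih =>
    have hSkP : (A - ρ • vecMulVec x w) ^ (k + 1) * vecMulVec x w = 0 := by
      rw [pow_succ, mul_assoc, hSP, Matrix.mul_zero]
    rw [pow_succ A, ih, add_mul, smul_mul, hPA, smul_smul, ← pow_succ,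
      pow_succ (A - ρ • vecMulVec x w) (k + 1), mul_sub (_ ^ (k + 1)) A, Matrix.mul_smul, hSkP,
      smul_zero, sub_zero]

end Deflation

variable [DecidableEq ι]

lemma charpoly_map_ne_zero (A : Matrix ι ι ℝ) :
    A.charpoly.map (algebraMap ℝ ℂ) ≠ 0 :=
  ((charpoly_monic A).map _).ne_zero

theorem roots_charpoly_sub_smul_vecMulVec {A : Matrix ι ι ℝ} {ρ : ℝ}
    {x w : ι → ℝ} (hx : A *ᵥ x = ρ • x) (hwx : w ⬝ᵥ x = 1) :
    ((A - ρ • vecMulVec x w).charpoly.map (algebraMap ℝ ℂ)).roots + {(ρ : ℂ)}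
      = (A.charpoly.map (algebraMap ℝ ℂ)).roots + {0} := by
  have h := congrArg (fun p => (p.map (algebraMap ℝ ℂ)).roots)
    (charpoly_sub_smul_vecMulVec_mul_X_sub_C hx hwx)
  simp only [Polynomial.map_mul, Polynomial.map_sub, map_X, map_C] at h
  rwa [roots_mul (mul_ne_zero (charpoly_map_ne_zero _) (X_sub_C_ne_zero _)),
    roots_mul (mul_ne_zero (charpoly_map_ne_zero A) X_ne_zero),
    roots_X_sub_C, roots_X] at h

theorem tendsto_inv_pow_smul_pow_of_spectralRadius_lt {M : Matrix ι ι ℂ} {r : ℝ}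
    (hr : spectralRadius ℂ M < ENNReal.ofReal r) :
    Tendsto (fun k : ℕ => (r ^ k)⁻¹ • M ^ k) atTop (𝓝 0) := by
  let _ := Matrix.linftyOpNormedRing (n := ι) (α := ℂ)
  let _ := Matrix.linftyOpNormedAlgebra (R := ℂ) (n := ι) (α := ℂ)
  let _ := Matrix.linftyOpNormedSpace (R := ℝ) (m := ι) (n := ι) (α := ℂ)
  have : CompleteSpace (Matrix ι ι ℂ) := FiniteDimensional.complete ℂ _
  obtain ⟨s, hMs, hsr⟩ := ENNReal.lt_iff_exists_nnreal_btwn.mp hr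
  have hr0 : 0 < r := ENNReal.ofReal_pos.1 (lt_of_le_of_lt bot_le hsr)
  have hsr' : (s : ℝ) < r := by
    rwa [← ENNReal.ofReal_coe_nnreal, ENNReal.ofReal_lt_ofReal_iff hr0] at hsr
  have hpow : ∀ᶠ k : ℕ in atTop, ‖M ^ k‖ ≤ (s : ℝ) ^ k := by
    filter_upwards [(spectrum.pow_nnnorm_pow_one_div_tendsto_nhds_spectralRadius M).eventually
      (gt_mem_nhds hMs), eventually_ne_atTop 0] with k hk hk0
    have := ENNReal.rpow_le_rpow hk.le (z := (k : ℝ)) (by positivity)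
    rw [← ENNReal.rpow_mul, one_div_mul_cancel (by exact_mod_cast hk0), ENNReal.rpow_one,
      ENNReal.rpow_natCast] at this
    exact_mod_cast this
  have hgeom : Tendsto (fun k : ℕ => ((s : ℝ) / r) ^ k) atTop (𝓝 0) :=
    tendsto_pow_atTop_nhds_zero_of_lt_one (by positivity) ((div_lt_one hr0).2 hsr')
  refine squeeze_zero_norm' ?_ hgeom
  filter_upwards [hpow] with k hk
  rw [norm_smul, norm_inv, norm_pow, Real.norm_of_nonneg hr0.le, div_pow, div_eq_inv_mul]
  gcongr

end Matrix

section SpecRadius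

variable {n : ℕ} {A : Matrix (Fin n) (Fin n) ℝ}

lemma specRadius_nonneg (A : Matrix (Fin n) (Fin n) ℝ) : 0 ≤ specRadius A :=
  NNReal.coe_nonneg _

lemma specRadius_transpose (A : Matrix (Fin n) (Fin n) ℝ) : specRadius Aᵀ = specRadius A := by
  simp [specRadius]

lemma mem_spectrum_map_iff_mem_roots {μ : ℂ} :
    μ ∈ spectrum ℂ (A.map (algebraMap ℝ ℂ)) ↔ μ ∈ (A.charpoly.map (algebraMap ℝ ℂ)).roots := by
  rw [mem_spectrum_iff_isRoot_charpoly, charpoly_map, mem_roots (charpoly_map_ne_zero A)]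

lemma exists_mulVec_eq_smul_of_mem_roots {μ : ℂ}
    (hμ : μ ∈ (A.charpoly.map (algebraMap ℝ ℂ)).roots) :
    ∃ v ≠ 0, A.map (algebraMap ℝ ℂ) *ᵥ v = μ • v :=
  exists_mulVec_eq_smul_of_isRoot
    (mem_spectrum_iff_isRoot_charpoly.1 (mem_spectrum_map_iff_mem_roots.2 hμ))

lemma roots_charpoly_map_ne_zero [NeZero n] (A : Matrix (Fin n) (Fin n) ℝ) :
    (A.charpoly.map (algebraMap ℝ ℂ)).roots ≠ 0 := by
  obtain ⟨μ, hμ⟩ := IsAlgClosed.exists_root (A.charpoly.map (algebraMap ℝ ℂ)) (by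
    rw [degree_map, charpoly_degree_eq_dim]; simp [NeZero.ne n])
  intro h0
  simpa [h0] using (mem_roots (charpoly_map_ne_zero A)).2 hμ

lemma norm_le_specRadius {μ : ℂ} (h : μ ∈ (A.charpoly.map (algebraMap ℝ ℂ)).roots) :
    ‖μ‖ ≤ specRadius A :=
  NNReal.coe_le_coe.2 (Multiset.le_sup (Multiset.mem_map_of_mem (fun z : ℂ => ‖z‖₊) h))

lemma exists_mem_roots_norm_eq_specRadius (h : (A.charpoly.map (algebraMap ℝ ℂ)).roots ≠ 0) :
    ∃ μ ∈ (A.charpoly.map (algebraMap ℝ ℂ)).roots, ‖μ‖ = specRadius A := by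
  obtain ⟨μ, hμ, hmax⟩ := Multiset.exists_max_image (fun z : ℂ => ‖z‖₊) h
  refine ⟨μ, hμ, le_antisymm (norm_le_specRadius hμ) ?_⟩
  refine (NNReal.coe_le_coe.2 ?_ : specRadius A ≤ (‖μ‖₊ : ℝ))
  exact Multiset.sup_le.2 fun _ hz => by
    obtain ⟨z, hzA, rfl⟩ := Multiset.mem_map.1 hz
    exact hmax z hzA

lemma specRadius_lt_of_forall_norm_lt {r : ℝ} (hr : 0 < r)
    (h : ∀ μ ∈ (A.charpoly.map (algebraMap ℝ ℂ)).roots, ‖μ‖ < r) : specRadius A < r := by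
  rcases eq_or_ne (A.charpoly.map (algebraMap ℝ ℂ)).roots 0 with h0 | h0
  · simpa [specRadius, h0] using hr
  · obtain ⟨μ, hμ, hμA⟩ := exists_mem_roots_norm_eq_specRadius h0
    exact hμA ▸ h μ hμ

theorem spectralRadius_map_eq_specRadius (A : Matrix (Fin n) (Fin n) ℝ) :
    spectralRadius ℂ (A.map (algebraMap ℝ ℂ)) = ENNReal.ofReal (specRadius A) := by
  refine le_antisymm (iSup₂_le fun μ hμ => ?_) ?_
  · rw [← ENNReal.ofReal_coe_nnreal]
    exact ENNReal.ofReal_le_ofReal (norm_le_specRadius (mem_spectrum_map_iff_mem_roots.1 hμ))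
  · rcases eq_or_ne (A.charpoly.map (algebraMap ℝ ℂ)).roots 0 with h0 | h0
    · simp [specRadius, h0]
    · obtain ⟨μ, hμ, hμA⟩ := exists_mem_roots_norm_eq_specRadius h0
      rw [← hμA]
      exact ENNReal.ofReal_coe_nnreal.le.trans
        (le_iSup₂ (f := fun z _ => (‖z‖₊ : ENNReal)) μ (mem_spectrum_map_iff_mem_roots.2 hμ))

theorem specRadius_pow_le (A : Matrix (Fin n) (Fin n) ℝ) {k : ℕ} (hk : k ≠ 0) :
    specRadius (A ^ k) ≤ specRadius A ^ k := by
  have h := spectrum.spectralRadius_pow_le_pow (𝕜 := ℂ) (A.map (algebraMap ℝ ℂ)) hk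
  rw [← Matrix.map_pow, spectralRadius_map_eq_specRadius, spectralRadius_map_eq_specRadius,
    ← ENNReal.ofReal_pow (specRadius_nonneg A)] at h
  exact (ENNReal.ofReal_le_ofReal_iff (pow_nonneg (specRadius_nonneg A) k)).1 h

theorem tendsto_inv_pow_smul_pow_of_specRadius_lt {r : ℝ} (h : specRadius A < r) :
    Tendsto (fun k : ℕ => (r ^ k)⁻¹ • A ^ k) atTop (𝓝 0) := by
  have hc := tendsto_inv_pow_smul_pow_of_spectralRadius_lt (M := A.map (algebraMap ℝ ℂ)) (r := r)
    (by rw [spectralRadius_map_eq_specRadius]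
        exact (ENNReal.ofReal_lt_ofReal_iff ((specRadius_nonneg A).trans_lt h)).2 h)
  simp_rw [← Matrix.map_pow] at hc
  have hre := ((continuous_id.matrix_map Complex.continuous_re).tendsto 0).comp hc
  convert hre using 1
  · ext k i j
    simp only [Function.comp_apply, id, Matrix.map_apply, Matrix.smul_apply, Complex.smul_re,
      Complex.coe_algebraMap, Complex.ofReal_re]
  · simp

/-- Collatz–Wielandt bound: `c ^ m • u ≤ B ^ m *ᵥ u` for all `m`, whereas `c⁻ᵐ • B ^ m → 0` if
`specRadius B < c`. -/
theorem le_specRadius_of_smul_le_mulVec {B : Matrix (Fin n) (Fin n) ℝ} (hB : ∀ i j, 0 ≤ B i j)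
    {u : Fin n → ℝ} (hu : 0 ≤ u) (hu0 : u ≠ 0) {c : ℝ} (hc : 0 < c) (h : c • u ≤ B *ᵥ u) :
    c ≤ specRadius B := by
  by_contra! hlt
  obtain ⟨i, hi⟩ := (Pi.lt_def.1 (hu.lt_of_ne' hu0)).2
  have hiter : ∀ m : ℕ, c ^ m • u ≤ B ^ m *ᵥ u := by
    intro m
    induction m with
    | zero => simp
    | succ m ih =>
      calc c ^ (m + 1) • u = c ^ m • (c • u) := by rw [pow_succ, mul_smul]
        _ ≤ c ^ m • (B *ᵥ u) := smul_le_smul_of_nonneg_left h (by positivity)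
        _ = B *ᵥ (c ^ m • u) := (mulVec_smul _ _ _).symm
        _ ≤ B *ᵥ (B ^ m *ᵥ u) := mulVec_mono_of_nonneg hB ih
        _ = B ^ (m + 1) *ᵥ u := by rw [mulVec_mulVec, pow_succ']
  have hlim := ((continuous_apply i).comp (continuous_id.matrix_mulVec (continuous_const (y := u)))
    |>.tendsto 0).comp (tendsto_inv_pow_smul_pow_of_specRadius_lt hlt)
  simp only [Function.comp_def, id, zero_mulVec, Pi.zero_apply] at hlim
  refine hi.not_ge (ge_of_tendsto hlim (Eventually.of_forall fun m => ?_))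
  rw [smul_mulVec, Pi.smul_apply, smul_eq_mul, le_inv_mul_iff₀ (by positivity)]
  exact hiter m i

/-- If `B *ᵥ u` exceeded `r • u` somewhere, then `w = B *ᵥ u` would satisfy
`B *ᵥ w ≥ (r + ε) • w`, contradicting the Collatz–Wielandt bound. -/
theorem mulVec_eq_smul_of_smul_le_mulVec {B : Matrix (Fin n) (Fin n) ℝ} (hB : ∀ i j, 0 < B i j)
    {r : ℝ} (hr : specRadius B ≤ r) {u : Fin n → ℝ} (hu : 0 ≤ u) (hu0 : u ≠ 0)
    (h : r • u ≤ B *ᵥ u) : B *ᵥ u = r • u := by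
  by_contra hne
  obtain ⟨i₀, -⟩ := Function.ne_iff.1 hu0
  have hBu := mulVec_pos_of_pos hB hu hu0
  have hBd := mulVec_pos_of_pos hB (sub_nonneg.2 h) (sub_ne_zero.2 hne)
  obtain ⟨ε, hε, hεd⟩ := exists_pos_forall_mul_le hBd (g := B *ᵥ u)
  have hgrow : (r + ε) • (B *ᵥ u) ≤ B *ᵥ (B *ᵥ u) := fun i => by
    have := hεd i
    simp only [mulVec_sub, mulVec_smul, Pi.sub_apply, Pi.smul_apply, smul_eq_mul] at this ⊢
    linarith
  have := le_specRadius_of_smul_le_mulVec (fun i j => (hB i j).le) (fun i => (hBu i).le)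
    (fun h0 => by simpa [h0] using hBu i₀) (by linarith [specRadius_nonneg B]) hgrow
  linarith

end SpecRadius

section EventuallyPos

variable {n : ℕ} {A : Matrix (Fin n) (Fin n) ℝ}

lemma EventuallyPos.transpose (hA : EventuallyPos A) : EventuallyPos Aᵀ := by
  obtain ⟨p, hp⟩ := hA
  exact ⟨p, fun k hk i j => by rw [← transpose_pow, transpose_apply]; exact hp k hk j i⟩

variable {μ : ℂ} {v : Fin n → ℂ}

theorem pow_mulVec_norm_eq_of_norm_eq_specRadius {k : ℕ} (hk : k ≠ 0)
    (hpos : ∀ i j, 0 < (A ^ k) i j) (hμ : ‖μ‖ = specRadius A) (hv0 : v ≠ 0)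
    (hv : A.map (algebraMap ℝ ℂ) *ᵥ v = μ • v) :
    A ^ k *ᵥ (fun j => ‖v j‖) = specRadius A ^ k • fun j => ‖v j‖ := by
  refine mulVec_eq_smul_of_smul_le_mulVec hpos (specRadius_pow_le A hk) (fun j => norm_nonneg _)
    (by simpa [funext_iff] using hv0) fun i => ?_
  have := norm_map_mulVec_le (fun i j => (hpos i j).le) v i
  rw [Matrix.map_pow, pow_mulVec_eq_smul hv] at this
  simpa [norm_pow, hμ] using this

theorem EventuallyPos.mulVec_norm_eq (hA : EventuallyPos A) (hμ : ‖μ‖ = specRadius A)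
    (hv0 : v ≠ 0) (hv : A.map (algebraMap ℝ ℂ) *ᵥ v = μ • v) :
    A *ᵥ (fun j => ‖v j‖) = specRadius A • fun j => ‖v j‖ := by
  obtain ⟨p, hp⟩ := hA
  have hk := pow_mulVec_norm_eq_of_norm_eq_specRadius p.succ_ne_zero (hp _ p.le_succ) hμ hv0 hv
  have hk' := pow_mulVec_norm_eq_of_norm_eq_specRadius (p + 1).succ_ne_zero
    (hp _ (by omega)) hμ hv0 hv
  have hρ := (pos_of_mulVec_eq_smul (hp _ p.le_succ) (fun j => norm_nonneg (v j))
    (by simpa [funext_iff] using hv0) hk).1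
  refine smul_right_injective _ hρ.ne' ?_
  calc specRadius A ^ (p + 1) • A *ᵥ (fun j => ‖v j‖)
      = A *ᵥ (A ^ (p + 1) *ᵥ fun j => ‖v j‖) := by rw [hk, mulVec_smul]
    _ = specRadius A ^ (p + 1) • specRadius A • fun j => ‖v j‖ := by
      rw [mulVec_mulVec, ← pow_succ', hk', smul_smul, ← pow_succ]

theorem EventuallyPos.exists_eq_mul_norm (hA : EventuallyPos A) (hμ : ‖μ‖ = specRadius A)
    (hv0 : v ≠ 0) (hv : A.map (algebraMap ℝ ℂ) *ᵥ v = μ • v) :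
    ∃ ζ : ℂ, ∀ j, v j = ζ * ‖v j‖ := by
  obtain ⟨p, hp⟩ := hA
  obtain ⟨i, -⟩ := Function.ne_iff.1 hv0
  have hrow := congrFun (pow_mulVec_norm_eq_of_norm_eq_specRadius p.succ_ne_zero
    (hp _ p.le_succ) hμ hv0 hv) i
  have hrowv := congrFun (pow_mulVec_eq_smul hv (p + 1)) i
  rw [← Matrix.map_pow] at hrowv
  refine Complex.exists_eq_mul_norm_of_norm_sum_eq (hp _ p.le_succ i) ?_
  simp only [mulVec, dotProduct, Matrix.map_apply, Complex.coe_algebraMap, Pi.smul_apply,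
    smul_eq_mul] at hrow hrowv
  rw [hrowv, hrow, norm_mul, norm_pow, hμ]

theorem EventuallyPos.eq_specRadius_of_norm_eq (hA : EventuallyPos A)
    (hμ : ‖μ‖ = specRadius A) (hv0 : v ≠ 0) (hv : A.map (algebraMap ℝ ℂ) *ᵥ v = μ • v) :
    μ = specRadius A := by
  obtain ⟨ζ, hζ⟩ := hA.exists_eq_mul_norm hμ hv0 hv
  have hu : A.map (algebraMap ℝ ℂ) *ᵥ (fun j => (‖v j‖ : ℂ))
      = (specRadius A : ℂ) • fun j => (‖v j‖ : ℂ) := funext fun i => by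
    simpa [Function.comp_def, hA.mulVec_norm_eq hμ hv0 hv] using
      (RingHom.map_mulVec (algebraMap ℝ ℂ) A (fun j => ‖v j‖) i).symm
  have hvζ : v = ζ • fun j => (‖v j‖ : ℂ) := funext hζ
  refine smul_left_injective ℂ hv0 (?_ : μ • v = (specRadius A : ℂ) • v)
  rw [← hv, hvζ, mulVec_smul, hu, smul_comm]

/-- Subtracting the largest multiple of `x` that keeps `y - t • x` nonnegative leaves a nonnegative
eigenvector with a zero entry, which a positive power of `A` forces to vanish. -/
theorem EventuallyPos.exists_eq_smul_of_mulVec_eq (hA : EventuallyPos A) {c : ℝ}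
    {x y : Fin n → ℝ} (hx : ∀ i, 0 < x i) (hAx : A *ᵥ x = c • x) (hAy : A *ᵥ y = c • y) :
    ∃ t : ℝ, y = t • x := by
  obtain ⟨p, hp⟩ := hA
  rcases isEmpty_or_nonempty (Fin n) with hn | hn
  · exact ⟨0, Subsingleton.elim _ _⟩
  obtain ⟨i₀, -, hmin⟩ := Finset.univ.exists_min_image (fun i => y i / x i) Finset.univ_nonempty
  refine ⟨y i₀ / x i₀, sub_eq_zero.1 (by_contra fun hz => ?_)⟩
  have hz0 : 0 ≤ y - (y i₀ / x i₀) • x := fun i => by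
    have := hmin i (Finset.mem_univ i)
    rw [div_le_div_iff₀ (hx i₀) (hx i)] at this
    simp only [Pi.zero_apply, Pi.sub_apply, Pi.smul_apply, smul_eq_mul, sub_nonneg,
      div_mul_eq_mul_div, div_le_iff₀ (hx i₀)]
    linarith
  have hAz : A *ᵥ (y - (y i₀ / x i₀) • x) = c • (y - (y i₀ / x i₀) • x) := by
    rw [mulVec_sub, mulVec_smul, hAx, hAy, smul_sub, smul_comm]
  have := (pos_of_mulVec_eq_smul (hp p le_rfl) hz0 hz (pow_mulVec_eq_smul hAz p)).2 i₀
  simp [(hx i₀).ne'] at this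

theorem EventuallyPos.not_isRoot_charpoly_sub_smul_vecMulVec (hA : EventuallyPos A) {ρ : ℝ}
    (hρ : ρ ≠ 0) {x w : Fin n → ℝ} (hx : ∀ i, 0 < x i) (hAx : A *ᵥ x = ρ • x)
    (hwA : w ᵥ* A = ρ • w) (hwx : w ⬝ᵥ x = 1) :
    ¬(A - ρ • vecMulVec x w).charpoly.IsRoot ρ := by
  intro h
  obtain ⟨y, hy0, hSy⟩ := exists_mulVec_eq_smul_of_isRoot h
  have hwy : w ⬝ᵥ y = 0 := by
    have := congrArg (w ⬝ᵥ ·) hSy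
    simp only [dotProduct_mulVec, vecMul_sub_smul_vecMulVec hwA hwx, zero_dotProduct,
      dotProduct_smul, smul_eq_mul] at this
    exact (mul_eq_zero.1 this.symm).resolve_left hρ
  have hAy : A *ᵥ y = ρ • y := by
    simpa [sub_mulVec, smul_mulVec, vecMulVec_mulVec, hwy] using hSy
  obtain ⟨t, rfl⟩ := hA.exists_eq_smul_of_mulVec_eq hx hAx hAy
  rw [dotProduct_smul, hwx, smul_eq_mul, mul_one] at hwy
  exact hy0 (by rw [hwy, zero_smul])

theorem EventuallyPos.exists_pos_mulVec_eq [NeZero n] (hA : EventuallyPos A) :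
    ∃ x : Fin n → ℝ, (∀ i, 0 < x i) ∧ A *ᵥ x = specRadius A • x := by
  obtain ⟨μ, hμ, hμA⟩ := exists_mem_roots_norm_eq_specRadius (roots_charpoly_map_ne_zero A)
  obtain ⟨v, hv0, hv⟩ := exists_mulVec_eq_smul_of_mem_roots hμ
  have hAu := hA.mulVec_norm_eq hμA hv0 hv
  obtain ⟨p, hp⟩ := hA
  exact ⟨_, (pos_of_mulVec_eq_smul (hp p le_rfl) (fun j => norm_nonneg _)
    (by simpa [funext_iff] using hv0) (pow_mulVec_eq_smul hAu p)).2, hAu⟩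

theorem EventuallyPos.specRadius_pos [NeZero n] (hA : EventuallyPos A) : 0 < specRadius A := by
  obtain ⟨x, hx, hAx⟩ := hA.exists_pos_mulVec_eq
  obtain ⟨p, hp⟩ := hA
  have := (pos_of_mulVec_eq_smul (hp _ p.le_succ) (fun i => (hx i).le)
    (fun h => (hx 0).ne' (congrFun h 0)) (pow_mulVec_eq_smul hAx (p + 1))).1
  exact (specRadius_nonneg A).lt_of_ne fun h => by simp [← h] at this

theorem EventuallyPos.norm_lt_specRadius (hA : EventuallyPos A) {μ : ℂ}
    (hμ : μ ∈ (A.charpoly.map (algebraMap ℝ ℂ)).roots) (hne : μ ≠ specRadius A) :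
    ‖μ‖ < specRadius A := by
  refine (norm_le_specRadius hμ).lt_of_ne fun h => hne ?_
  obtain ⟨v, hv0, hv⟩ := exists_mulVec_eq_smul_of_mem_roots hμ
  exact hA.eq_specRadius_of_norm_eq h hv0 hv

theorem EventuallyPos.rootMultiplicity_specRadius [NeZero n] (hA : EventuallyPos A)
    (hAt : EventuallyPos Aᵀ) :
    (A.charpoly.map (algebraMap ℝ ℂ)).rootMultiplicity (specRadius A : ℂ) = 1 := by
  obtain ⟨x, hx, hAx⟩ := hA.exists_pos_mulVec_eq
  obtain ⟨y, hy, hAy⟩ := hAt.exists_pos_mulVec_eq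
  rw [specRadius_transpose, mulVec_transpose] at hAy
  obtain ⟨w, -, hwA, hwx⟩ := exists_vecMul_eq_smul_dotProduct_eq_one hx hy hAy
  have hρ := hA.specRadius_pos.ne'
  have hS : (specRadius A : ℂ) ∉
      ((A - specRadius A • vecMulVec x w).charpoly.map (algebraMap ℝ ℂ)).roots := fun h =>
    hA.not_isRoot_charpoly_sub_smul_vecMulVec hρ hx hAx hwA hwx <|
      (isRoot_map_iff (algebraMap ℝ ℂ).injective).1 (isRoot_of_mem_roots h)
  have := congrArg (Multiset.count (specRadius A : ℂ)) (roots_charpoly_sub_smul_vecMulVec hAx hwx)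
  simpa [Multiset.count_eq_zero.2 hS, hρ] using this.symm

theorem EventuallyPos.hasStrongPF [NeZero n] (hA : EventuallyPos A) (hAt : EventuallyPos Aᵀ) :
    HasStrongPF A :=
  ⟨hA.specRadius_pos, hA.rootMultiplicity_specRadius hAt, hA.exists_pos_mulVec_eq,
    fun _ hμ hne => hA.norm_lt_specRadius hμ hne⟩

end EventuallyPos

section StrongPF

variable {n : ℕ} {A : Matrix (Fin n) (Fin n) ℝ}

/-- Removing the Perron eigenvalue leaves only the eigenvalue `0` and the roots of modulus
`< ρ`. -/
theorem HasStrongPF.specRadius_sub_smul_vecMulVec_lt (hA : HasStrongPF A) {x w : Fin n → ℝ}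
    (hAx : A *ᵥ x = specRadius A • x) (hwx : w ⬝ᵥ x = 1) :
    specRadius (A - specRadius A • vecMulVec x w) < specRadius A := by
  obtain ⟨hρ, hmult, -, hdom⟩ := hA
  have hroots := roots_charpoly_sub_smul_vecMulVec hAx hwx
  refine specRadius_lt_of_forall_norm_lt hρ fun μ hμ => ?_
  rcases eq_or_ne μ 0 with rfl | hμ0
  · simpa using hρ
  have hμA : μ ∈ (A.charpoly.map (algebraMap ℝ ℂ)).roots := by
    have := Multiset.mem_add.2 (Or.inl (b := μ ∈ ({(specRadius A : ℂ)} : Multiset ℂ)) hμ)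
    simpa [hroots, hμ0] using this
  refine hdom μ hμA fun hμρ => ?_
  subst hμρ
  have hcount := congrArg (Multiset.count (specRadius A : ℂ)) hroots
  rw [Multiset.count_add, Multiset.count_add, Multiset.count_singleton_self,
    Multiset.count_singleton, if_neg hμ0, count_roots, count_roots, hmult] at hcount
  have := Multiset.count_pos.2 hμ
  rw [count_roots] at this
  omega

theorem eventuallyPos_of_tendsto_smul_pow {c : ℕ → ℝ} (hc : ∀ k, 0 < c k)
    {P : Matrix (Fin n) (Fin n) ℝ} (hP : ∀ i j, 0 < P i j)
    (h : Tendsto (fun k => c k • A ^ k) atTop (𝓝 P)) : EventuallyPos A := by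
  have : ∀ᶠ k in atTop, ∀ i j, 0 < (c k • A ^ k) i j :=
    eventually_all.2 fun i => eventually_all.2 fun j =>
      ((continuous_apply j).comp (continuous_apply i) |>.tendsto P |>.comp h).eventually
        (lt_mem_nhds (hP i j))
  obtain ⟨p, hp⟩ := eventually_atTop.1 this
  exact ⟨p, fun k hk i j => pos_of_mul_pos_right (hp k hk i j) (hc k).le⟩

theorem HasStrongPF.eventuallyPos [NeZero n] (hA : HasStrongPF A) (hAt : HasStrongPF Aᵀ) :
    EventuallyPos A := by
  obtain ⟨hρ, -, ⟨x, hx, hAx⟩, -⟩ := id hA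
  obtain ⟨-, -, ⟨y, hy, hAy⟩, -⟩ := hAt
  rw [specRadius_transpose, mulVec_transpose] at hAy
  obtain ⟨w, hw, hwA, hwx⟩ := exists_vecMul_eq_smul_dotProduct_eq_one hx hy hAy
  have hlim := (tendsto_inv_pow_smul_pow_of_specRadius_lt
    (hA.specRadius_sub_smul_vecMulVec_lt hAx hwx)).add_const (vecMulVec x w)
  rw [zero_add] at hlim
  refine eventuallyPos_of_tendsto_smul_pow (fun k => inv_pos.2 (pow_pos hρ k))
    (fun i j => mul_pos (hx i) (hw j)) (hlim.congr' ((eventually_ne_atTop 0).mono fun k hk => ?_))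
  obtain ⟨k, rfl⟩ := Nat.exists_eq_add_one_of_ne_zero hk
  dsimp only
  rw [pow_succ_eq_sub_smul_vecMulVec_pow_add hAx hwA hwx k, smul_add, smul_smul,
    inv_mul_cancel₀ (pow_ne_zero _ hρ.ne'), one_smul]

end StrongPF

/-- A real matrix is eventually positive iff both it and its transpose possess
the strong Perron–Frobenius property. -/
theorem eventuallyPos_iff_strongPF {n : ℕ} (hn : 1 ≤ n)
    (A : Matrix (Fin n) (Fin n) ℝ) :
    EventuallyPos A ↔ HasStrongPF A ∧ HasStrongPF Aᵀ := by
  have : NeZero n := ⟨by omega⟩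
  refine ⟨fun hA => ⟨hA.hasStrongPF hA.transpose, hA.transpose.hasStrongPF ?_⟩,
    fun h => h.1.eventuallyPos h.2⟩
  rwa [transpose_transpose]
end

section
/- Let n ≥ 1 and let A be a real n×n matrix that is eventually positive. Then the matrix exponential exp(A) is eventually positive. -/
/-!
Since `exp A ^ k = exp (k • A)`, each entry of `exp A ^ k` is the power series
`∑ₘ (A ^ m)ᵢⱼ kᵐ / m!` evaluated at `k`. If `A ^ m > 0` for `m ≥ p`, all coefficients from
index `p` on are nonnegative and the `p`-th is positive, so as `k → ∞` the term of degree `p`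
dominates the polynomial formed by the finitely many earlier terms.
-/

open Polynomial Matrix

open Filter Asymptotics
open scoped Nat

theorem eventually_pos_of_hasSum_pow {c : ℕ → ℝ} {f : ℝ → ℝ} {p : ℕ}
    (hf : ∀ t, HasSum (fun m => c m * t ^ m) (f t))
    (hc : ∀ m ≥ p, 0 ≤ c m) (hcp : 0 < c p) :
    ∀ᶠ t in atTop, 0 < f t := by
  have hhead : (fun t : ℝ => ∑ m ∈ Finset.range p, c m * t ^ m) =o[atTop] fun t => t ^ p :=
    IsLittleO.fun_sum fun m hm =>
      (isLittleO_pow_pow_atTop_of_lt (Finset.mem_range.mp hm)).const_mul_left (c m)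
  filter_upwards [hhead.bound (half_pos hcp), eventually_gt_atTop 0] with t hbound ht
  have htail : 0 ≤ ∑' m, c (m + (p + 1)) * t ^ (m + (p + 1)) :=
    tsum_nonneg fun m => mul_nonneg (hc _ (by omega)) (by positivity)
  have hsplit := ((hf t).summable.sum_add_tsum_nat_add (p + 1)).symm
  rw [(hf t).tsum_eq, Finset.sum_range_succ] at hsplit
  have hpow : 0 < t ^ p := by positivity
  rw [Real.norm_eq_abs, Real.norm_eq_abs, abs_of_pos hpow] at hbound
  nlinarith [(abs_le.mp hbound).1]

theorem Matrix.hasSum_exp_smul_apply {ι : Type*} [Fintype ι] [DecidableEq ι]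
    (A : Matrix ι ι ℝ) (t : ℝ) (i j : ι) :
    HasSum (fun m : ℕ => (A ^ m) i j / m ! * t ^ m) (NormedSpace.exp (t • A) i j) := by
  let _ : NormedRing (Matrix ι ι ℝ) := Matrix.linftyOpNormedRing
  let _ : NormedAlgebra ℝ (Matrix ι ι ℝ) := Matrix.linftyOpNormedAlgebra
  have h := Pi.hasSum.mp (Pi.hasSum.mp (NormedSpace.exp_series_hasSum_exp' (𝕂 := ℝ) (t • A)) i) j
  convert h using 1
  · funext m
    simp only [_root_.smul_pow, Matrix.smul_apply, smul_eq_mul]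
    ring
  · rfl

theorem eventuallyPos_iff_eventually {n : ℕ} (A : Matrix (Fin n) (Fin n) ℝ) :
    EventuallyPos A ↔ ∀ᶠ k in atTop, ∀ i j, 0 < (A ^ k) i j :=
  eventually_atTop.symm

theorem eventuallyPos_exp_general {n : ℕ} (A : Matrix (Fin n) (Fin n) ℝ)
    (hA : EventuallyPos A) :
    EventuallyPos (NormedSpace.exp A) := by
  obtain ⟨p, hp⟩ := hA
  rw [eventuallyPos_iff_eventually]
  refine eventually_all.2 fun i => eventually_all.2 fun j => ?_
  have hreal : ∀ᶠ t : ℝ in atTop, 0 < NormedSpace.exp (t • A) i j :=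
    eventually_pos_of_hasSum_pow (A.hasSum_exp_smul_apply · i j)
      (fun m hm => div_nonneg (hp m hm i j).le (by positivity))
      (div_pos (hp p le_rfl i j) (by positivity))
  filter_upwards [tendsto_natCast_atTop_atTop.eventually hreal] with k hk
  rwa [← Matrix.exp_nsmul, ← Nat.cast_smul_eq_nsmul ℝ]

/-- The matrix exponential preserves eventual positivity. -/
theorem eventuallyPos_exp {n : ℕ} (hn : 1 ≤ n) (A : Matrix (Fin n) (Fin n) ℝ)
    (hA : EventuallyPos A) :
    EventuallyPos (NormedSpace.exp A) :=
  eventuallyPos_exp_general A hA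
end

section
/- Let k ≥ 1 and let w₀, w₁, …, w_{k−1} be complex numbers. Let T be the real 2k×2k matrix built from k×k blocks of size 2×2, whose (i,j) block equals C(w_{j−i}) when j ≥ i and the zero 2×2 matrix when j < i, where C(w) is the 2×2 real matrix with rows (Re w, Im w) and (−Im w, Re w). Let U(v) denote the k×k complex upper triangular Toeplitz matrix whose (i,j) entry is v_{j−i} for j ≥ i and 0 for j < i. Then there exists an invertible complex 2k×2k matrix S such that S⁻¹ · T · S equals the block diagonal direct sum U(w) ⊕ U(conj ∘ w), where T is viewed as a complex matrix via entrywise coercion. -/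
open Matrix

/-- The 2×2 real matrix representation of a complex number. -/
def Cmat (z : ℂ) : Matrix (Fin 2) (Fin 2) ℝ :=
  !![z.re, z.im; -z.im, z.re]

/-- The k×k upper triangular Toeplitz matrix with entries from `v`. -/
def Umat (k : ℕ) (v : ℕ → ℂ) : Matrix (Fin k) (Fin k) ℂ :=
  Matrix.of fun i j => if (i : ℕ) ≤ (j : ℕ) then v ((j : ℕ) - (i : ℕ)) else 0

open Kronecker

noncomputable def Pm : Matrix (Fin 2) (Fin 2) ℂ := !![1, 1; Complex.I, -Complex.I]
noncomputable def Qm : Matrix (Fin 2) (Fin 2) ℂ := !![1/2, -Complex.I/2; 1/2, Complex.I/2]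
def Jm : Matrix (Fin 2) (Fin 2) ℂ := !![0, 1; -1, 0]

lemma QP : Qm * Pm = 1 := by
  ext i j
  fin_cases i <;> fin_cases j <;>
    simp [Qm, Pm, Matrix.mul_apply, Fin.sum_univ_two] <;> ring_nf <;>
    simp [Complex.ext_iff] <;> ring

lemma PQ : Pm * Qm = 1 := by
  ext i j
  fin_cases i <;> fin_cases j <;>
    simp [Qm, Pm, Matrix.mul_apply, Fin.sum_univ_two] <;> ring_nf <;>
    simp [Complex.ext_iff] <;> ring

lemma QJP : Qm * Jm * Pm = !![Complex.I, 0; 0, -Complex.I] := by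
  ext i j
  fin_cases i <;> fin_cases j <;>
    simp [Qm, Pm, Jm, Matrix.mul_apply, Fin.sum_univ_two] <;> ring_nf <;>
    simp [Complex.ext_iff] <;> ring

/-- The real block upper triangular Toeplitz matrix built from 2×2 blocks `C(w_{j-i})`
is similar, over ℂ, to the direct sum of the upper triangular Toeplitz matrices
associated to `w` and to `conj ∘ w`. -/
theorem real_block_toeplitz_similar (k : ℕ) (hk : 1 ≤ k) (w : ℕ → ℂ)
    (T : Matrix (Fin k × Fin 2) (Fin k × Fin 2) ℝ)
    (hT : T = Matrix.of fun p q : Fin k × Fin 2 =>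
      if (p.1 : ℕ) ≤ (q.1 : ℕ) then Cmat (w ((q.1 : ℕ) - (p.1 : ℕ))) p.2 q.2 else 0) :
    ∃ S : Matrix (Fin k × Fin 2) (Fin k × Fin 2) ℂ, IsUnit S ∧
      S⁻¹ * T.map Complex.ofReal * S =
        Matrix.blockDiagonal
          (fun b : Fin 2 => if b = 0 then Umat k w else Umat k (fun j => starRingEnd ℂ (w j))) := by
  classical
  set S : Matrix (Fin k × Fin 2) (Fin k × Fin 2) ℂ := (1 : Matrix (Fin k) (Fin k) ℂ) ⊗ₖ Pm with hS
  set S' : Matrix (Fin k × Fin 2) (Fin k × Fin 2) ℂ := (1 : Matrix (Fin k) (Fin k) ℂ) ⊗ₖ Qm with hS'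
  have hSS' : S * S' = 1 := by
    rw [hS, hS', ← Matrix.mul_kronecker_mul, PQ, Matrix.one_mul, Matrix.one_kronecker_one]
  have hS'S : S' * S = 1 := by
    rw [hS, hS', ← Matrix.mul_kronecker_mul, QP, Matrix.one_mul, Matrix.one_kronecker_one]
  have hU : IsUnit S := ⟨⟨S, S', hSS', hS'S⟩, rfl⟩
  have hinv : S⁻¹ = S' := Matrix.inv_eq_left_inv hS'S
  refine ⟨S, hU, ?_⟩
  rw [hinv]
  -- decompose T
  set Ure : Matrix (Fin k) (Fin k) ℂ := Umat k (fun j => ((w j).re : ℂ)) with hUre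
  set Uim : Matrix (Fin k) (Fin k) ℂ := Umat k (fun j => ((w j).im : ℂ)) with hUim
  have hTdecomp : T.map Complex.ofReal = Ure ⊗ₖ (1 : Matrix (Fin 2) (Fin 2) ℂ) + Uim ⊗ₖ Jm := by
    ext ⟨i, a⟩ ⟨j, b⟩
    simp only [hT, Matrix.map_apply, Matrix.of_apply, Matrix.add_apply,
      Matrix.kroneckerMap_apply, hUre, hUim, Umat, Matrix.of_apply]
    by_cases h : (i : ℕ) ≤ (j : ℕ)
    · simp only [h, if_pos]
      fin_cases a <;> fin_cases b <;>
        simp [Cmat, Jm, Matrix.one_apply]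
    · simp [h]
  rw [hTdecomp]
  rw [Matrix.mul_add, Matrix.add_mul, hS, hS',
    ← Matrix.mul_kronecker_mul, ← Matrix.mul_kronecker_mul,
    ← Matrix.mul_kronecker_mul, ← Matrix.mul_kronecker_mul,
    Matrix.one_mul, Matrix.one_mul, Matrix.mul_one, Matrix.mul_one, QP, QJP]
  ext ⟨i, a⟩ ⟨j, b⟩
  fin_cases a <;> fin_cases b <;>
    simp only [Matrix.add_apply, Matrix.kroneckerMap_apply, Matrix.blockDiagonal_apply,
      hUre, hUim, Umat, Matrix.of_apply, Matrix.one_apply, Fin.isValue,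
      Matrix.cons_val', Matrix.cons_val_zero, Matrix.cons_val_one, Matrix.head_cons,
      Matrix.head_fin_const, Matrix.empty_val', Matrix.cons_val_fin_one] <;>
    norm_num <;>
    split_ifs with h <;> simp [Complex.ext_iff] <;> ring
end

section
/- Let n ≥ 1 and p ≥ 1 be integers, and let A be a real n×n matrix possessing the strong Perron–Frobenius property that is diagonalizable over ℂ: there exist an invertible complex n×n matrix P and a function d : Fin n → ℂ with (viewing A as a complex matrix) A = P · diag(d) · P⁻¹. Suppose no eigenvalue d(i) lies in the closed negative real axis (−∞, 0], and suppose there is a permutation σ of the index set with d(σ(i)) = conj(d(i)) for all i and conj(P(i,j)) = P(i,σ(j)) for all i,j. Then there exists a real n×n matrix B whose entrywise coercion to ℂ equals P · diag(i ↦ d(i)^(1/p)) · P⁻¹ (principal complex power), such that B possesses the strong Perron–Frobenius property and B^p = A. -/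
/-!
Put `C = P · diag(d i ^ (1/p)) · P⁻¹`. Entrywise conjugation permutes the columns of `P` and the
entries of `d` by the same `σ`, and the principal root commutes with conjugation off the negative
real axis, so `C` is fixed by conjugation, i.e. real. Its eigenvalues are the `d i ^ (1/p)`. The
principal `p`-th root is injective and acts on moduli by the strictly increasing `r ↦ r ^ (1/p)`,
so the simple dominant eigenvalue `ρ` of `A` becomes the simple dominant eigenvalue `ρ ^ (1/p)`
of `C`; and since `A` and `C` are diagonalized by the same `P`, every `ρ`-eigenvector of `A` is a
`ρ ^ (1/p)`-eigenvector of `C`.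
-/

open Polynomial Matrix

namespace Matrix

variable {m n R : Type*}

theorem map_re_map_ofReal_of_map_conj {C : Matrix m n ℂ} (h : C.map (starRingEnd ℂ) = C) :
    (C.map Complex.re).map Complex.ofReal = C := by
  ext i j
  exact Complex.conj_eq_iff_re.mp (congrFun (congrFun h i) j)

variable [Fintype n]

theorem mulVec_eq_smul_iff_map_ofReal {B : Matrix n n ℝ} {x : n → ℝ} {r : ℝ} :
    B *ᵥ x = r • x ↔
      B.map Complex.ofReal *ᵥ (Complex.ofReal ∘ x) = (r : ℂ) • (Complex.ofReal ∘ x) := by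
  simp only [funext_iff]
  refine forall_congr' fun i => ?_
  rw [← Complex.ofReal_inj]
  simp [mulVec, dotProduct]

variable [DecidableEq n]

theorem roots_charpoly_conj_diagonal [CommRing R] [IsDomain R] {P : Matrix n n R} (hP : IsUnit P)
    (d : n → R) : (P * diagonal d * P⁻¹).charpoly.roots = Finset.univ.val.map d := by
  lift P to (Matrix n n R)ˣ using hP
  rw [charpoly_units_conj, charpoly_diagonal, Finset.prod_eq_multiset_prod]
  simpa only [Multiset.map_map, Function.comp_def] using
    roots_multiset_prod_X_sub_C (Finset.univ.val.map d)

theorem conj_diagonal_pow [CommRing R] {P : Matrix n n R} (hP : IsUnit P) (d : n → R) (k : ℕ) :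
    (P * diagonal d * P⁻¹) ^ k = P * diagonal (d ^ k) * P⁻¹ := by
  lift P to (Matrix n n R)ˣ using hP
  rw [← coe_units_inv, Units.conj_pow, diagonal_pow]

theorem map_conj_diagonal_of_perm [CommRing R] (f : R →+* R) (σ : Equiv.Perm n)
    {P : Matrix n n R} (hP : IsUnit P) (e : n → R) (hPσ : ∀ i j, f (P i j) = P i (σ j))
    (heσ : ∀ i, f (e i) = e (σ i)) :
    (P * diagonal e * P⁻¹).map f = P * diagonal e * P⁻¹ := by
  have hmap : P.map f = P.submatrix id σ := by
    ext i j
    exact hPσ i j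
  have hmap_inv : P⁻¹.map f = P⁻¹.submatrix σ id := by
    have hleft : P⁻¹.map f * P.submatrix id σ = 1 := by
      rw [← hmap, ← Matrix.map_mul, nonsing_inv_mul P ((isUnit_iff_isUnit_det P).mp hP),
        Matrix.map_one f f.map_zero f.map_one]
    rw [← inv_eq_left_inv hleft]
    exact inv_submatrix_equiv P (Equiv.refl n) σ
  have hmap_diag : (diagonal e).map f = (diagonal e).submatrix σ σ := by
    rw [diagonal_map f.map_zero, submatrix_diagonal_equiv]
    exact congrArg diagonal (funext heσ)
  rw [Matrix.map_mul, Matrix.map_mul, hmap, hmap_inv, hmap_diag, submatrix_mul_equiv,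
    submatrix_mul_equiv, submatrix_id_id]

theorem conj_diagonal_comp_mulVec [CommRing R] [IsDomain R] {P : Matrix n n R} (hP : IsUnit P)
    {d : n → R} {v : n → R} {c : R} (h : (P * diagonal d * P⁻¹) *ᵥ v = c • v) (g : R → R) :
    (P * diagonal (g ∘ d) * P⁻¹) *ᵥ v = g c • v := by
  have hPdet := (isUnit_iff_isUnit_det P).mp hP
  set y := P⁻¹ *ᵥ v
  have hv : v = P *ᵥ y := by
    rw [mulVec_mulVec, mul_nonsing_inv P hPdet, one_mulVec]
  have hy : ∀ i, d i * y i = c * y i := by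
    have hcancel : P⁻¹ * (P * diagonal d * P⁻¹) = diagonal d * P⁻¹ := by
      rw [← Matrix.mul_assoc, ← Matrix.mul_assoc, nonsing_inv_mul P hPdet, Matrix.one_mul]
    have hdy : diagonal d *ᵥ y = c • y := by
      rw [mulVec_mulVec, ← hcancel, ← mulVec_mulVec, h, mulVec_smul]
    intro i
    simpa only [mulVec_diagonal, Pi.smul_apply, smul_eq_mul] using congrFun hdy i
  have hdiag : diagonal (g ∘ d) *ᵥ y = g c • y := by
    ext i
    rw [mulVec_diagonal, Pi.smul_apply, smul_eq_mul, Function.comp_apply]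
    rcases eq_or_ne (y i) 0 with hyi | hyi
    · rw [hyi, mul_zero, mul_zero]
    · rw [mul_right_cancel₀ hyi (hy i)]
  rw [← mulVec_mulVec, ← mulVec_mulVec, hdiag, mulVec_smul, ← hv]

theorem roots_charpoly_map_of_map_ofReal_eq {A : Matrix n n ℝ} {P : Matrix n n ℂ} (hP : IsUnit P)
    {d : n → ℂ} (h : A.map Complex.ofReal = P * diagonal d * P⁻¹) :
    (A.charpoly.map (algebraMap ℝ ℂ)).roots = Finset.univ.val.map d := by
  rw [← charpoly_map]
  exact h ▸ roots_charpoly_conj_diagonal hP d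

end Matrix

theorem Complex.arg_ne_pi_of_notMem_image_Iic {z : ℂ} (hz : z ∉ Complex.ofReal '' Set.Iic 0) :
    z.arg ≠ Real.pi := by
  intro h
  obtain ⟨hre, him⟩ := Complex.arg_eq_pi_iff.mp h
  exact hz ⟨z.re, hre.le, Complex.ext rfl him.symm⟩

theorem Complex.conj_cpow_natCast_inv {z : ℂ} (hz : z.arg ≠ Real.pi) (p : ℕ) :
    starRingEnd ℂ (z ^ (p⁻¹ : ℂ)) = starRingEnd ℂ z ^ (p⁻¹ : ℂ) := by
  rw [Complex.conj_cpow z _ hz, map_inv₀, map_natCast]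

theorem Complex.cpow_natCast_inv_injective {p : ℕ} (hp : p ≠ 0) :
    Function.Injective fun z : ℂ => z ^ (p⁻¹ : ℂ) :=
  Function.LeftInverse.injective (g := (· ^ p)) fun z => Complex.cpow_nat_inv_pow z hp

theorem Complex.ofReal_cpow_natCast_inv {r : ℝ} (hr : 0 ≤ r) (p : ℕ) :
    (r : ℂ) ^ (p⁻¹ : ℂ) = ((r ^ (p⁻¹ : ℝ) : ℝ) : ℂ) := by
  rw [Complex.ofReal_cpow hr, Complex.ofReal_inv, Complex.ofReal_natCast]

theorem specRadius_eq_of_mem_roots {n : ℕ} {A : Matrix (Fin n) (Fin n) ℝ} {ρ : ℝ} (hρ : 0 ≤ ρ)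
    (hmem : (ρ : ℂ) ∈ (A.charpoly.map (algebraMap ℝ ℂ)).roots)
    (hle : ∀ μ ∈ (A.charpoly.map (algebraMap ℝ ℂ)).roots, ‖μ‖ ≤ ρ) : specRadius A = ρ := by
  have hsup : ((A.charpoly.map (algebraMap ℝ ℂ)).roots.map (‖·‖₊)).sup = ‖(ρ : ℂ)‖₊ := by
    refine le_antisymm (Multiset.sup_le.mpr ?_) (Multiset.le_sup (Multiset.mem_map_of_mem _ hmem))
    refine Multiset.forall_mem_map_iff.mpr fun μ hμ => ?_
    rw [← NNReal.coe_le_coe, coe_nnnorm, coe_nnnorm, Complex.norm_real, Real.norm_of_nonneg hρ]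
    exact hle μ hμ
  rw [specRadius, hsup, coe_nnnorm, Complex.norm_real, Real.norm_of_nonneg hρ]

theorem HasStrongPF.of_roots_eq_map {n : ℕ} {A B : Matrix (Fin n) (Fin n) ℝ} (hA : HasStrongPF A)
    {f : ℂ → ℂ} {g : ℝ → ℝ} (hf : Function.Injective f) (hfg : ∀ z, ‖f z‖ = g ‖z‖)
    (hg : StrictMonoOn g (Set.Ici 0)) (hfρ : f (specRadius A) = g (specRadius A))
    (hroots : (B.charpoly.map (algebraMap ℝ ℂ)).roots =
      (A.charpoly.map (algebraMap ℝ ℂ)).roots.map f)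
    (heig : ∀ x, A *ᵥ x = specRadius A • x → B *ᵥ x = g (specRadius A) • x) :
    HasStrongPF B := by
  obtain ⟨hρ, hmult, ⟨x, hx, hAx⟩, hdom⟩ := hA
  set ρ := specRadius A
  have hmem : (ρ : ℂ) ∈ (A.charpoly.map (algebraMap ℝ ℂ)).roots :=
    Multiset.count_pos.mp (by rw [count_roots, hmult]; exact one_pos)
  have hle : ∀ μ ∈ (A.charpoly.map (algebraMap ℝ ℂ)).roots, ‖μ‖ ≤ ρ := fun μ hμ => by
    rcases eq_or_ne μ ρ with rfl | hne
    · rw [Complex.norm_real, Real.norm_of_nonneg hρ.le]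
    · exact (hdom μ hμ hne).le
  have hgρ : 0 < g ρ := calc
    0 ≤ ‖f 0‖ := norm_nonneg _
    _ = g 0 := by rw [hfg, norm_zero]
    _ < g ρ := hg Set.self_mem_Ici hρ.le hρ
  have hspec : specRadius B = g ρ := by
    refine specRadius_eq_of_mem_roots hgρ.le (hroots ▸ hfρ ▸ Multiset.mem_map_of_mem f hmem) ?_
    rw [hroots]
    refine Multiset.forall_mem_map_iff.mpr fun μ hμ => ?_
    rw [hfg]
    exact hg.monotoneOn (norm_nonneg μ) hρ.le (hle μ hμ)
  refine ⟨hspec ▸ hgρ, ?_, ⟨x, hx, hspec ▸ heig x hAx⟩, ?_⟩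
  · rw [← count_roots, hroots, hspec, ← hfρ, Multiset.count_map_eq_count' f _ hf, count_roots, hmult]
  · rw [hroots, hspec]
    refine Multiset.forall_mem_map_iff.mpr fun μ hμ hne => ?_
    rw [hfg]
    exact hg (norm_nonneg μ) hρ.le (hdom μ hμ fun h => hne (h ▸ hfρ))

theorem strongPF_root_general {n : ℕ} (p : ℕ) (hp : 1 ≤ p)
    (A : Matrix (Fin n) (Fin n) ℝ) (hA : HasStrongPF A)
    (P : Matrix (Fin n) (Fin n) ℂ) (hP : IsUnit P) (d : Fin n → ℂ)
    (hdiag : A.map Complex.ofReal = P * Matrix.diagonal d * P⁻¹)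
    (hneg : ∀ i, d i ∉ Complex.ofReal '' Set.Iic (0 : ℝ))
    (σ : Equiv.Perm (Fin n))
    (hdσ : ∀ i, d (σ i) = starRingEnd ℂ (d i))
    (hPσ : ∀ i j, starRingEnd ℂ (P i j) = P i (σ j)) :
    ∃ B : Matrix (Fin n) (Fin n) ℝ,
      B.map Complex.ofReal = P * Matrix.diagonal (fun i => d i ^ (1 / (p : ℂ))) * P⁻¹ ∧
      HasStrongPF B ∧ B ^ p = A := by
  have hp0 : p ≠ 0 := by omega
  simp only [one_div]
  set C := P * diagonal (fun i => d i ^ (p⁻¹ : ℂ)) * P⁻¹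
  have hC_conj : C.map (starRingEnd ℂ) = C :=
    map_conj_diagonal_of_perm _ σ hP _ hPσ fun i => by
      rw [hdσ, Complex.conj_cpow_natCast_inv (Complex.arg_ne_pi_of_notMem_image_Iic (hneg i))]
  have hBC := map_re_map_ofReal_of_map_conj hC_conj
  refine ⟨C.map Complex.re, hBC, ?_, ?_⟩
  · refine hA.of_roots_eq_map (Complex.cpow_natCast_inv_injective hp0)
      (fun z => Complex.norm_cpow_inv_nat z p)
      (Real.strictMonoOn_rpow_Ici_of_exponent_pos (by positivity))
      (Complex.ofReal_cpow_natCast_inv hA.1.le p) ?_ fun x hx => ?_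
    · rw [roots_charpoly_map_of_map_ofReal_eq hP hBC, roots_charpoly_map_of_map_ofReal_eq hP hdiag,
        Multiset.map_map]
      rfl
    · rw [mulVec_eq_smul_iff_map_ofReal, hdiag] at hx
      rw [mulVec_eq_smul_iff_map_ofReal, hBC, ← Complex.ofReal_cpow_natCast_inv hA.1.le p]
      exact conj_diagonal_comp_mulVec hP hx (· ^ (p⁻¹ : ℂ))
  · have hpow : (C.map Complex.re ^ p).map Complex.ofReal = A.map Complex.ofReal := calc
      _ = (C.map Complex.re).map Complex.ofReal ^ p := Matrix.map_pow _ Complex.ofRealHom p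
      _ = P * diagonal ((fun i => d i ^ (p⁻¹ : ℂ)) ^ p) * P⁻¹ := by rw [hBC, conj_diagonal_pow hP]
      _ = P * diagonal d * P⁻¹ :=
        congrArg (fun e => P * diagonal e * P⁻¹) (funext fun i => Complex.cpow_nat_inv_pow (d i) hp0)
      _ = A.map Complex.ofReal := hdiag.symm
    exact map_injective Complex.ofReal_injective hpow

/-- Real p-th roots of diagonalizable matrices with the strong Perron–Frobenius
property, via the principal branch of the complex power. -/
theorem strongPF_root {n : ℕ} (hn : 1 ≤ n) (p : ℕ) (hp : 1 ≤ p)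
    (A : Matrix (Fin n) (Fin n) ℝ) (hA : HasStrongPF A)
    (P : Matrix (Fin n) (Fin n) ℂ) (hP : IsUnit P) (d : Fin n → ℂ)
    (hdiag : A.map Complex.ofReal = P * Matrix.diagonal d * P⁻¹)
    (hneg : ∀ i, d i ∉ Complex.ofReal '' Set.Iic (0 : ℝ))
    (σ : Equiv.Perm (Fin n))
    (hdσ : ∀ i, d (σ i) = starRingEnd ℂ (d i))
    (hPσ : ∀ i j, starRingEnd ℂ (P i j) = P i (σ j)) :
    ∃ B : Matrix (Fin n) (Fin n) ℝ,
      B.map Complex.ofReal = P * Matrix.diagonal (fun i => d i ^ (1 / (p : ℂ))) * P⁻¹ ∧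
      HasStrongPF B ∧ B ^ p = A :=
  strongPF_root_general p hp A hA P hP d hdiag hneg σ hdσ hPσ
end

section
/- Let n ≥ 2 and let A be a real n×n matrix possessing the strong Perron–Frobenius property that is diagonalizable over ℂ: there exist an invertible complex n×n matrix P and a function d : Fin n → ℂ with (viewing A as a complex matrix) A = P · diag(d) · P⁻¹, and suppose there is a permutation σ of the index set with d(σ(i)) = conj(d(i)) for all i and conj(P(i,j)) = P(i,σ(j)) for all i,j. Then there exists a real n×n matrix B whose entrywise coercion to ℂ equals P · diag(i ↦ (|d(i)| : ℂ)) · P⁻¹, and B possesses the strong Perron–Frobenius property. -/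
open Polynomial Matrix

/-! Write `A = P diag(d) P⁻¹` and take `B = P diag(|d|) P⁻¹`. The symmetry `σ` makes `B` fixed
by complex conjugation, hence real. The spectrum of `B` is `|d|`, with the same spectral radius
`ρ`; since `ρ` strictly dominates every other eigenvalue of `A`, the indices with `|d i| = ρ` are
exactly those with `d i = ρ`, so `ρ` stays simple and dominant. Finally, for the positive
eigenvector `x` of `A`, `P⁻¹ x` is supported on those indices, so `B x = ρ x` too. -/

lemma Matrix.exists_map_ofReal_eq_of_map_conj_eq_s12 {m ι : Type*} {M : Matrix m ι ℂ}
    (hM : M.map (starRingEnd ℂ) = M) : ∃ B : Matrix m ι ℝ, B.map Complex.ofReal = M :=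
  ⟨M.map Complex.re, by ext i j; exact Complex.conj_eq_iff_re.mp (congrFun (congrFun hM i) j)⟩

section ComplexConjugation

variable {ι : Type*} [Fintype ι] [DecidableEq ι]

lemma Matrix.nonsing_inv_map_starRingEnd {R : Type*} [CommRing R] [StarRing R]
    (A : Matrix ι ι R) : A⁻¹.map (starRingEnd R) = (A.map (starRingEnd R))⁻¹ := by
  change A⁻¹ᴴᵀ = Aᴴᵀ⁻¹
  rw [conjTranspose_nonsing_inv, transpose_nonsing_inv]

lemma Matrix.map_starRingEnd_conj_diagonal {R : Type*} [CommRing R] [StarRing R]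
    {P : Matrix ι ι R} {e : ι → R} (σ : Equiv.Perm ι)
    (hPσ : ∀ i j, starRingEnd R (P i j) = P i (σ j))
    (heσ : ∀ i, e (σ i) = starRingEnd R (e i)) :
    (P * diagonal e * P⁻¹).map (starRingEnd R) = P * diagonal e * P⁻¹ := by
  have hP : P.map (starRingEnd R) = P.submatrix (Equiv.refl ι) σ := by ext i j; exact hPσ i j
  have hPinv : P⁻¹.map (starRingEnd R) = P⁻¹.submatrix σ (Equiv.refl ι) := by
    rw [nonsing_inv_map_starRingEnd, hP, inv_submatrix_equiv]
  have hD : (diagonal e).map (starRingEnd R) = (diagonal e).submatrix σ σ := by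
    rw [submatrix_diagonal_equiv, diagonal_map (map_zero _)]
    exact congrArg diagonal (funext fun i => (heσ i).symm)
  rw [Matrix.map_mul, Matrix.map_mul, hP, hD, hPinv, submatrix_mul_equiv, submatrix_mul_equiv]
  rfl

end ComplexConjugation

lemma Matrix.map_mulVec_comp_eq_smul_iff {ι R S : Type*} [Fintype ι] [CommRing R] [CommRing S]
    {f : R →+* S} (hf : Function.Injective f) (B : Matrix ι ι R) (x : ι → R) (c : R) :
    B.map f *ᵥ (f ∘ x) = f c • (f ∘ x) ↔ B *ᵥ x = c • x := by
  simp only [funext_iff, ← RingHom.map_mulVec, Pi.smul_apply, Function.comp_apply, smul_eq_mul,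
    ← map_mul, hf.eq_iff]

section Diagonalizable

variable {ι K : Type*} [Fintype ι] [DecidableEq ι] [Field K]

/-- `P⁻¹ v` is supported on the indices with `d i = c`, where `g (d i) = g c`. -/
lemma Matrix.mulVec_conj_diagonal_comp_eq_smul {P : Matrix ι ι K} (hP : IsUnit P) {d : ι → K}
    (g : K → K) {v : ι → K} {c : K} (hv : (P * diagonal d * P⁻¹) *ᵥ v = c • v) :
    (P * diagonal (fun i => g (d i)) * P⁻¹) *ᵥ v = g c • v := by
  have hdet : IsUnit P.det := (isUnit_iff_isUnit_det P).mp hP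
  set w := P⁻¹ *ᵥ v with hw
  have hPw : P *ᵥ w = v := by rw [hw, mulVec_mulVec, mul_nonsing_inv P hdet, one_mulVec]
  have hDw : diagonal d *ᵥ w = c • w := by
    apply mulVec_injective_of_isUnit hP
    rw [mulVec_smul, hPw, ← hv, hw, mulVec_mulVec, mulVec_mulVec]
  have hdw : ∀ i, d i * w i = c * w i := by
    simpa only [funext_iff, mulVec_diagonal, Pi.smul_apply, smul_eq_mul] using hDw
  have hgw : ∀ i, g (d i) * w i = g c * w i := by
    intro i
    rcases eq_or_ne (w i) 0 with h0 | h0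
    · simp [h0]
    · rw [mul_right_cancel₀ h0 (hdw i)]
  calc (P * diagonal (fun i => g (d i)) * P⁻¹) *ᵥ v
      = P *ᵥ (diagonal (fun i => g (d i)) *ᵥ w) := by rw [hw, mulVec_mulVec, mulVec_mulVec]
    _ = P *ᵥ (g c • w) := by congr 1; ext i; rw [mulVec_diagonal, hgw]; rfl
    _ = g c • v := by rw [mulVec_smul, hPw]

lemma Matrix.roots_charpoly_map_eq_of_conj_diagonal {L : Type*} [Field L] [Algebra K L]
    {A : Matrix ι ι K} {P : Matrix ι ι L} (hP : IsUnit P) {d : ι → L}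
    (hA : A.map (algebraMap K L) = P * diagonal d * P⁻¹) :
    (A.charpoly.map (algebraMap K L)).roots = Finset.univ.val.map d := by
  rw [← charpoly_map, hA, ← hP.unit_spec, charpoly_units_conj, charpoly_diagonal,
    Finset.prod_eq_multiset_prod]
  exact Multiset.map_map (fun a => X - C a) d _ ▸ roots_multiset_prod_X_sub_C _

end Diagonalizable

section ModulusOfSpectrum

variable {ρ : ℝ}

lemma Complex.ofReal_norm_eq_ofReal_iff_of_dominant {z : ℂ} (hρ : 0 ≤ ρ)
    (hz : z ≠ ρ → ‖z‖ < ρ) : ((‖z‖ : ℝ) : ℂ) = ρ ↔ z = ρ := by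
  refine ⟨fun h => by_contra fun hne => ?_, fun h => by simp [h, abs_of_nonneg hρ]⟩
  exact (hz hne).ne (Complex.ofReal_inj.mp h)

variable {s : Multiset ℂ}

lemma Multiset.count_map_ofReal_norm_of_dominant (hρ : 0 ≤ ρ)
    (hs : ∀ z ∈ s, z ≠ ρ → ‖z‖ < ρ) :
    (s.map fun z => ((‖z‖ : ℝ) : ℂ)).count (ρ : ℂ) = s.count (ρ : ℂ) := by
  rw [Multiset.count_map, Multiset.count_eq_card_filter_eq]
  congr 1
  refine Multiset.filter_congr fun z hz => ?_
  rw [eq_comm, Complex.ofReal_norm_eq_ofReal_iff_of_dominant hρ (hs z hz), eq_comm]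

lemma Multiset.dominant_map_ofReal_norm (hρ : 0 ≤ ρ) (hs : ∀ z ∈ s, z ≠ ρ → ‖z‖ < ρ) :
    ∀ μ ∈ s.map (fun z => ((‖z‖ : ℝ) : ℂ)), μ ≠ ρ → ‖μ‖ < ρ := by
  rintro _ hμ hne
  obtain ⟨z, hz, rfl⟩ := Multiset.mem_map.mp hμ
  rw [Complex.norm_real, norm_norm]
  exact hs z hz (mt (Complex.ofReal_norm_eq_ofReal_iff_of_dominant hρ (hs z hz)).mpr hne)

end ModulusOfSpectrum

section StrongPF

variable {n : ℕ} {A B : Matrix (Fin n) (Fin n) ℝ}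

lemma specRadius_eq_of_roots_eq_map_norm
    (h : (B.charpoly.map (algebraMap ℝ ℂ)).roots =
      (A.charpoly.map (algebraMap ℝ ℂ)).roots.map fun z => ((‖z‖ : ℝ) : ℂ)) :
    specRadius B = specRadius A := by
  simp only [specRadius, h, Multiset.map_map, Function.comp_def, Complex.nnnorm_real,
    nnnorm_norm]

lemma HasStrongPF.of_roots_eq_map_norm (hA : HasStrongPF A)
    (h : (B.charpoly.map (algebraMap ℝ ℂ)).roots =
      (A.charpoly.map (algebraMap ℝ ℂ)).roots.map fun z => ((‖z‖ : ℝ) : ℂ))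
    {x : Fin n → ℝ} (hx : ∀ i, 0 < x i) (hBx : B *ᵥ x = specRadius A • x) :
    HasStrongPF B := by
  obtain ⟨hρ, hmult, -, hdom⟩ := hA
  rw [HasStrongPF, specRadius_eq_of_roots_eq_map_norm h, ← count_roots, h,
    Multiset.count_map_ofReal_norm_of_dominant hρ.le hdom, count_roots]
  exact ⟨hρ, hmult, ⟨x, hx, hBx⟩, Multiset.dominant_map_ofReal_norm hρ.le hdom⟩

end StrongPF

theorem strongPF_abs_general {n : ℕ}
    (A : Matrix (Fin n) (Fin n) ℝ) (hA : HasStrongPF A)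
    (P : Matrix (Fin n) (Fin n) ℂ) (hP : IsUnit P) (d : Fin n → ℂ)
    (hdiag : A.map Complex.ofReal = P * Matrix.diagonal d * P⁻¹)
    (σ : Equiv.Perm (Fin n))
    (hdσ : ∀ i, d (σ i) = starRingEnd ℂ (d i))
    (hPσ : ∀ i j, starRingEnd ℂ (P i j) = P i (σ j)) :
    ∃ B : Matrix (Fin n) (Fin n) ℝ,
      B.map Complex.ofReal = P * Matrix.diagonal (fun i => ((‖d i‖ : ℝ) : ℂ)) * P⁻¹ ∧
      HasStrongPF B := by
  obtain ⟨B, hB⟩ := exists_map_ofReal_eq_of_map_conj_eq_s12 <|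
    map_starRingEnd_conj_diagonal (e := fun i => ((‖d i‖ : ℝ) : ℂ)) σ hPσ fun i => by
      rw [hdσ, Complex.norm_conj, Complex.conj_ofReal]
  obtain ⟨x, hx, hAx⟩ := hA.2.2.1
  have hBx : B *ᵥ x = specRadius A • x := by
    have hAx' := (map_mulVec_comp_eq_smul_iff (algebraMap ℝ ℂ).injective A x _).mpr hAx
    rw [show A.map (algebraMap ℝ ℂ) = _ from hdiag] at hAx'
    refine (map_mulVec_comp_eq_smul_iff (algebraMap ℝ ℂ).injective B x _).mp ?_
    rw [show B.map (algebraMap ℝ ℂ) = _ from hB]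
    convert mulVec_conj_diagonal_comp_eq_smul hP (fun z => ((‖z‖ : ℝ) : ℂ)) hAx' using 2
    simp [abs_of_pos hA.1]
  refine ⟨B, hB, hA.of_roots_eq_map_norm ?_ hx hBx⟩
  rw [roots_charpoly_map_eq_of_conj_diagonal hP hB,
    roots_charpoly_map_eq_of_conj_diagonal hP hdiag, Multiset.map_map]
  rfl

/-- The modulus function is Frobenius: it preserves the strong Perron–Frobenius
property for diagonalizable matrices. -/
theorem strongPF_abs {n : ℕ} (hn : 2 ≤ n)
    (A : Matrix (Fin n) (Fin n) ℝ) (hA : HasStrongPF A)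
    (P : Matrix (Fin n) (Fin n) ℂ) (hP : IsUnit P) (d : Fin n → ℂ)
    (hdiag : A.map Complex.ofReal = P * Matrix.diagonal d * P⁻¹)
    (σ : Equiv.Perm (Fin n))
    (hdσ : ∀ i, d (σ i) = starRingEnd ℂ (d i))
    (hPσ : ∀ i j, starRingEnd ℂ (P i j) = P i (σ j)) :
    ∃ B : Matrix (Fin n) (Fin n) ℝ,
      B.map Complex.ofReal = P * Matrix.diagonal (fun i => ((‖d i‖ : ℝ) : ℂ)) * P⁻¹ ∧
      HasStrongPF B :=
  strongPF_abs_general A hA P hP d hdiag σ hdσ hPσ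
end
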